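/- arXiv:0801.2982 — 11 statements merged into one kernel-verified Lean document; each statement's English description precedes it below -/
import Mathlib

section
/- Let r, κ₁, κ₂, κ₃ be positive integers and let N₁, N₂, N₃ and N₁', N₂', N₃' be real matrices with Nᵢ and Nᵢ' of size r × κᵢ. Let jᵢ denote the Kruskal rank of Nᵢ. If j₁ + j₂ + j₃ ≥ 2r + 2 and [N₁,N₂,N₃] = [N₁',N₂',N₃'], then there exist an r × r permutation matrix P and r × r diagonal matrices D₁, D₂, D₃ with D₁D₂D₃ = I such that Nᵢ' = P Dᵢ Nᵢ for i = 1,2,3. -/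
/-- The Kruskal rank of a real matrix: the largest `j` such that every set of `j`
rows is linearly independent. -/
noncomputable def kruskalRank {r κ : ℕ} (N : Matrix (Fin r) (Fin κ) ℝ) : ℕ :=
  sSup {j | j ≤ r ∧ ∀ s : Finset (Fin r), s.card = j →
    LinearIndependent ℝ (fun i : s => N (i : Fin r))}

/-- The triple product `[N₁, N₂, N₃]`. -/
def tripleProd {r κ₁ κ₂ κ₃ : ℕ} (N₁ : Matrix (Fin r) (Fin κ₁) ℝ)
    (N₂ : Matrix (Fin r) (Fin κ₂) ℝ) (N₃ : Matrix (Fin r) (Fin κ₃) ℝ) :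
    Fin κ₁ → Fin κ₂ → Fin κ₃ → ℝ :=
  fun k₁ k₂ k₃ => ∑ j, N₁ j k₁ * N₂ j k₂ * N₃ j k₃

/-- The permutation matrix of a permutation `σ`. -/
def permMatrix {n : ℕ} (σ : Equiv.Perm (Fin n)) : Matrix (Fin n) (Fin n) ℝ :=
  Matrix.of fun i j => if σ i = j then 1 else 0

/-!
We follow Rhodes' proof (*A concise proof of Kruskal's theorem on tensor decomposition*, 2010),
viewing the rows `aⱼ, bⱼ, cⱼ` of `N₁, N₂, N₃` (Kruskal ranks `ka, kb, kc`) as vectors of Euclidean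
spaces. Contracting the tensor `∑ⱼ aⱼ ⊗ bⱼ ⊗ cⱼ` with a vector `z` in the third slot gives a map of
rank at least `min ka ω + min kb ω - ω` (Sylvester's inequality) and, through the primed
decomposition, at most `ω'`, where `ω` and `ω'` count the `j` with `⟪cⱼ, z⟫ ≠ 0` and `⟪c'ⱼ, z⟫ ≠ 0`.
When `ka + kb + kc ≥ 2r + 2`, taking `z` orthogonal to a subfamily and generic otherwise turns this
into counting statements: first the `c'ⱼ` are `kc`-wise independent too, then for every set `S` of
fewer than `kc` indices exactly `#S` of the `c'ᵢ` lie in the span of the `cⱼ`, `j ∈ S` (downward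
induction on `#S`). For singletons this says `c' = γ • c ∘ τ`, and likewise for `a'` and `b'`.
Testing the tensor against vectors orthogonal to all but a few `bⱼ` and `cⱼ` finally shows that the
three permutations agree and that the scalars multiply to `1`.
-/

open Finset Submodule Module
open scoped InnerProductSpace

section LinearAlgebra

theorem LinearIndepOn.span_image_inter {R M ι : Type*} [Ring R] [AddCommGroup M] [Module R M]
    {v : ι → M} {s t : Set ι} (hv : LinearIndepOn R v (s ∪ t)) :
    span R (v '' s) ⊓ span R (v '' t) = span R (v '' (s ∩ t)) := by
  refine le_antisymm ?_ (le_inf (span_mono (Set.image_mono Set.inter_subset_left))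
    (span_mono (Set.image_mono Set.inter_subset_right)))
  intro x hx
  obtain ⟨hxs, hxt⟩ := mem_inf.mp hx
  rw [Finsupp.mem_span_image_iff_linearCombination] at hxs hxt ⊢
  obtain ⟨l, hl, rfl⟩ := hxs
  obtain ⟨l', hl', hll'⟩ := hxt
  have : l' = l := linearIndepOn_iffₛ.mp hv l'
    (Finsupp.supported_mono Set.subset_union_right hl') l
    (Finsupp.supported_mono Set.subset_union_left hl) hll'
  subst this
  exact ⟨l', by rw [Finsupp.supported_inter]; exact mem_inf.mpr ⟨hl, hl'⟩, rfl⟩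

theorem LinearMap.finrank_range_add_finrank_range_le {K M N P : Type*} [DivisionRing K]
    [AddCommGroup M] [Module K M] [AddCommGroup N] [Module K N] [AddCommGroup P] [Module K P]
    [FiniteDimensional K N] (f : M →ₗ[K] N) (g : N →ₗ[K] P) :
    finrank K (LinearMap.range g) + finrank K (LinearMap.range f) ≤
      finrank K (LinearMap.range (g ∘ₗ f)) + finrank K N := by
  let g' := g.domRestrict (LinearMap.range f)
  have hrange : LinearMap.range g' = LinearMap.range (g ∘ₗ f) := by
    rw [LinearMap.range_domRestrict, LinearMap.range_comp]
  have hker : finrank K (LinearMap.ker g') ≤ finrank K (LinearMap.ker g) := by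
    rw [← Submodule.finrank_map_subtype_eq]
    refine Submodule.finrank_mono ?_
    rintro _ ⟨x, hx, rfl⟩
    exact hx
  have := g'.finrank_range_add_finrank_ker
  have := g.finrank_range_add_finrank_ker
  rw [hrange] at *
  omega

variable {K V ι : Type*}

theorem finrank_span_image_le [DivisionRing K] [AddCommGroup V] [Module K V] (u : ι → V)
    (s : Finset ι) : finrank K (span K (u '' s)) ≤ #s := by
  classical
  rw [← coe_image]
  exact (finrank_span_finset_le_card _).trans card_image_le

def KruskalIndependent (K : Type*) [Semiring K] [AddCommMonoid V] [Module K V] (k : ℕ)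
    (u : ι → V) : Prop :=
  ∀ s : Finset ι, #s ≤ k → LinearIndepOn K u s

namespace KruskalIndependent

variable [DivisionRing K] [AddCommGroup V] [Module K V] {k : ℕ} {u : ι → V}

theorem finrank_span_image (h : KruskalIndependent K k u) {s : Finset ι} (hs : #s ≤ k) :
    finrank K (span K (u '' s)) = #s := by
  rw [Set.image_eq_range, finrank_span_eq_card (h s hs)]
  simp

theorem min_le_finrank_span_image (h : KruskalIndependent K k u) (s : Finset ι) :
    min k #s ≤ finrank K (span K (u '' s)) := by
  obtain ⟨t, hts, ht⟩ := exists_subset_card_eq (min_le_right k #s)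
  rw [← ht, ← h.finrank_span_image (ht ▸ min_le_left k #s)]
  have := FiniteDimensional.span_of_finite K (s.finite_toSet.image u)
  exact Submodule.finrank_mono (span_mono (Set.image_mono (by simpa using hts)))

theorem ne_zero (h : KruskalIndependent K k u) (hk : 1 ≤ k) (i : ι) : u i ≠ 0 :=
  (h {i} (by simpa using hk)).ne_zero (by simp)

theorem notMem_span_image (h : KruskalIndependent K k u) {s : Finset ι} {i : ι}
    (hs : #s < k) (hi : i ∉ s) : u i ∉ span K (u '' s) := by
  classical
  have := h (insert i s) ((card_insert_le i s).trans hs)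
  rw [coe_insert] at this
  exact this.notMem_span_of_insert (by simpa using hi)

theorem card_filter_mem_le [Fintype ι] [FiniteDimensional K V] (h : KruskalIndependent K k u)
    (W : Submodule K V) [DecidablePred (u · ∈ W)] (hW : finrank K W < k) :
    #{j | u j ∈ W} ≤ finrank K W := by
  by_contra! hlt
  obtain ⟨t, hts, ht⟩ := exists_subset_card_eq hlt
  have hle : span K (u '' t) ≤ W := span_le.mpr (by rintro _ ⟨j, hj, rfl⟩; simpa using hts hj)
  have := Submodule.finrank_mono hle
  rw [h.finrank_span_image (by omega)] at this
  omega

theorem eq_zero_of_sum_smul_eq_zero (h : KruskalIndependent K k u) {s : Finset ι} (hs : #s ≤ k)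
    {f : ι → K} (hf : ∑ j ∈ s, f j • u j = 0) {j : ι} (hj : j ∈ s) : f j = 0 :=
  Fintype.linearIndependent_iff.mp (h s hs) (fun i => f i)
    ((sum_coe_sort s fun j => f j • u j).trans hf) ⟨j, hj⟩

end KruskalIndependent

end LinearAlgebra

section InnerProduct

variable {ι E : Type*} [Fintype ι] [NormedAddCommGroup E] [InnerProductSpace ℝ E]

theorem Submodule.mem_orthogonal_span_iff {s : Set E} {y : E} :
    y ∈ (span ℝ s)ᗮ ↔ ∀ v ∈ s, ⟪v, y⟫_ℝ = 0 := by
  rw [← span_singleton_le_iff_mem, ← isOrtho_iff_le, isOrtho_span]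
  simp [real_inner_comm]

omit [Fintype ι] in
theorem Submodule.exists_mem_orthogonal_inner_eq_zero_iff [Finite ι] [FiniteDimensional ℝ E]
    (W : Submodule ℝ E) (v : ι → E) : ∃ x ∈ Wᗮ, ∀ i, ⟪v i, x⟫_ℝ = 0 ↔ v i ∈ W := by
  classical
  have := Fintype.ofFinite ι
  let H : {i // v i ∉ W} → Submodule ℝ Wᗮ := fun i =>
    LinearMap.ker ((innerₛₗ ℝ (v i)).domRestrict Wᗮ)
  have hH : ∀ i, H i ≠ ⊤ := by
    rintro ⟨i, hi⟩ htop
    refine hi ?_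
    rw [← W.orthogonal_orthogonal, mem_orthogonal']
    intro x hx
    have hmem : (⟨x, hx⟩ : Wᗮ) ∈ H ⟨i, hi⟩ := htop ▸ mem_top
    simpa [H] using hmem
  -- `Wᗮ` is not the union of the finitely many proper subspaces `H i`
  obtain ⟨x, -, hx⟩ := Set.exists_of_ssubset
    (iUnion_ssubset_of_forall_ne_top_of_card_lt univ H hH
      (by rw [ENat.card_eq_top_of_infinite]; exact ENat.natCast_lt_top _))
  refine ⟨x, x.2, fun i => ⟨fun hi => ?_, fun hi => inner_right_of_mem_orthogonal hi x.2⟩⟩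
  by_contra hiW
  exact hx (Set.mem_biUnion (mem_univ ⟨i, hiW⟩) (by simpa [H] using hi))

noncomputable def innerSupport (c : ι → E) (z : E) : Finset ι := {j | ⟪c j, z⟫_ℝ ≠ 0}

theorem card_innerSupport_add_card_le {c : ι → E} {z : E} {t : Finset ι}
    (ht : ∀ j ∈ t, ⟪c j, z⟫_ℝ = 0) : #(innerSupport c z) + #t ≤ Fintype.card ι := by
  classical
  have hdisj : Disjoint (innerSupport c z) t :=
    disjoint_left.mpr fun j hj hjt => (mem_filter.mp hj).2 (ht j hjt)
  rw [← card_union_of_disjoint hdisj]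
  exact card_le_univ _

open Classical in
theorem Submodule.exists_mem_orthogonal_card_innerSupport_add [FiniteDimensional ℝ E]
    (W : Submodule ℝ E) (v : ι → E) :
    ∃ x ∈ Wᗮ, #(innerSupport v x) + #{i | v i ∈ W} = Fintype.card ι := by
  obtain ⟨x, hxW, hx⟩ := W.exists_mem_orthogonal_inner_eq_zero_iff v
  refine ⟨x, hxW, ?_⟩
  rw [← card_univ, ← card_filter_add_card_filter_not (s := univ) (fun i => ⟪v i, x⟫_ℝ ≠ 0)]
  simp only [innerSupport, not_not, hx]

theorem KruskalIndependent.exists_inner_eq_zero_iff [FiniteDimensional ℝ E] {u : ι → E} {k : ℕ}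
    (h : KruskalIndependent ℝ k u) {s : Finset ι} (hs : #s < k) :
    ∃ x, ∀ j, ⟪u j, x⟫_ℝ = 0 ↔ j ∈ s := by
  classical
  obtain ⟨x, -, hx⟩ := (span ℝ (u '' s)).exists_mem_orthogonal_inner_eq_zero_iff u
  refine ⟨x, fun j => (hx j).trans ⟨fun hj => ?_, fun hj => subset_span ⟨j, hj, rfl⟩⟩⟩
  by_contra hjs
  exact h.notMem_span_image hs hjs hj

end InnerProduct

section Slices

variable {ι E₁ E₂ E₃ : Type*}
  [NormedAddCommGroup E₁] [InnerProductSpace ℝ E₁] [NormedAddCommGroup E₂] [InnerProductSpace ℝ E₂]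
  [NormedAddCommGroup E₃] [InnerProductSpace ℝ E₃]

/-- The trilinear form of the tensor `∑ⱼ aⱼ ⊗ bⱼ ⊗ cⱼ`; on rows of matrices it is the triple
product (`trilinear_rows`). -/
def trilinear [Fintype ι] (a : ι → E₁) (b : ι → E₂) (c : ι → E₃) (x : E₁) (y : E₂) (z : E₃) : ℝ :=
  ∑ j, ⟪a j, x⟫_ℝ * ⟪b j, y⟫_ℝ * ⟪c j, z⟫_ℝ

variable [Fintype ι] {a a' : ι → E₁} {b b' : ι → E₂} {c c' : ι → E₃}

theorem trilinear_rotate (a : ι → E₁) (b : ι → E₂) (c : ι → E₃) (x : E₁) (y : E₂) (z : E₃) :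
    trilinear b c a y z x = trilinear a b c x y z :=
  sum_congr rfl fun _ _ => by ring

theorem trilinear_rotate_eq (h : trilinear a b c = trilinear a' b' c') :
    trilinear b c a = trilinear b' c' a' := by
  funext y z x
  rw [trilinear_rotate a b c, trilinear_rotate a' b' c', h]

theorem sum_smul_eq_of_trilinear_eq (h : trilinear a b c = trilinear a' b' c') (y : E₂) (z : E₃) :
    ∑ j, (⟪c j, z⟫_ℝ * ⟪b j, y⟫_ℝ) • a j = ∑ j, (⟪c' j, z⟫_ℝ * ⟪b' j, y⟫_ℝ) • a' j := by
  refine ext_inner_left ℝ fun x => ?_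
  have hx := congrFun (congrFun (congrFun h x) y) z
  simp only [trilinear] at hx
  simp only [inner_sum, real_inner_smul_right, fun j => real_inner_comm (a j) x,
    fun j => real_inner_comm (a' j) x]
  convert hx using 2 <;> ring

/-- `y ↦ ∑_{j ∈ s} d j ⟪b j, y⟫ a j`, written as a composite through `s → ℝ` so that its rank is
bounded above by `#s` and below by Sylvester's inequality. -/
noncomputable def sliceMap (a : ι → E₁) (b : ι → E₂) (d : ι → ℝ) (s : Finset ι) :
    E₂ →ₗ[ℝ] E₁ :=
  Fintype.linearCombination ℝ (fun j : s => a j) ∘ₗ LinearMap.pi fun j : s => d j • innerₛₗ ℝ (b j)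

omit [Fintype ι] in
theorem sliceMap_apply (a : ι → E₁) (b : ι → E₂) (d : ι → ℝ) (s : Finset ι) (y : E₂) :
    sliceMap a b d s y = ∑ j ∈ s, (d j * ⟪b j, y⟫_ℝ) • a j := by
  simp only [sliceMap, LinearMap.comp_apply, Fintype.linearCombination_apply, LinearMap.pi_apply,
    LinearMap.smul_apply, innerₛₗ_apply_apply, smul_eq_mul]
  exact sum_coe_sort s fun j => (d j * ⟪b j, y⟫_ℝ) • a j

omit [Fintype ι] in
theorem finrank_range_sliceMap_le (a : ι → E₁) (b : ι → E₂) (d : ι → ℝ) (s : Finset ι) :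
    finrank ℝ (LinearMap.range (sliceMap a b d s)) ≤ #s :=
  calc finrank ℝ (LinearMap.range (sliceMap a b d s))
      ≤ finrank ℝ (LinearMap.range (Fintype.linearCombination ℝ fun j : s => a j)) :=
        Submodule.finrank_mono (LinearMap.range_comp_le_range _ _)
    _ ≤ finrank ℝ (s → ℝ) := LinearMap.finrank_range_le _
    _ = #s := by simp

omit [Fintype ι] in
theorem finrank_span_add_finrank_span_le [FiniteDimensional ℝ E₂] (a : ι → E₁) (b : ι → E₂)
    {d : ι → ℝ} {s : Finset ι} (hd : ∀ j ∈ s, d j ≠ 0) :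
    finrank ℝ (span ℝ (a '' s)) + finrank ℝ (span ℝ (b '' s)) ≤
      finrank ℝ (LinearMap.range (sliceMap a b d s)) + #s := by
  let f : E₂ →ₗ[ℝ] s → ℝ := LinearMap.pi fun j : s => d j • innerₛₗ ℝ (b j)
  have hker : LinearMap.ker f = (span ℝ (b '' s))ᗮ := by
    ext y
    simp [f, mem_orthogonal_span_iff, funext_iff, hd _]
  let g : (s → ℝ) →ₗ[ℝ] E₁ := Fintype.linearCombination ℝ fun j : s => a j
  have hrange : LinearMap.range g = span ℝ (a '' s) := by
    rw [Fintype.range_linearCombination, Set.image_eq_range]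
    rfl
  have hsyl := LinearMap.finrank_range_add_finrank_range_le f g
  have := f.finrank_range_add_finrank_ker
  have := (span ℝ (b '' s)).finrank_add_finrank_orthogonal
  rw [hrange] at hsyl
  rw [hker] at *
  simp only [finrank_fintype_fun_eq_card, Fintype.card_coe] at hsyl
  change _ ≤ finrank ℝ (LinearMap.range (g ∘ₗ f)) + #s
  omega

theorem sliceMap_innerSupport (a : ι → E₁) (b : ι → E₂) (c : ι → E₃) (y : E₂) (z : E₃) :
    sliceMap a b (⟪c ·, z⟫_ℝ) (innerSupport c z) y = ∑ j, (⟪c j, z⟫_ℝ * ⟪b j, y⟫_ℝ) • a j := by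
  rw [sliceMap_apply, innerSupport, sum_filter_of_ne]
  intro j _ hj hcj
  simp [hcj] at hj

/-- The `z`-slice has rank at least `min ka ω + min kb ω - ω` and at most `ω'`, where `ω`, `ω'` are
the sizes of the two supports; for small `ω'` this forces `ω ≤ ω'`. -/
theorem card_innerSupport_le_of_trilinear_eq [FiniteDimensional ℝ E₂] {ka kb : ℕ}
    (ha : KruskalIndependent ℝ ka a) (hb : KruskalIndependent ℝ kb b)
    (hka : ka ≤ Fintype.card ι) (hkb : kb ≤ Fintype.card ι)
    (h : trilinear a b c = trilinear a' b' c') {z : E₃}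
    (hz : #(innerSupport c' z) + Fintype.card ι < ka + kb) :
    #(innerSupport c z) ≤ #(innerSupport c' z) := by
  classical
  have hslice : sliceMap a b (⟪c ·, z⟫_ℝ) (innerSupport c z) =
      sliceMap a' b' (⟪c' ·, z⟫_ℝ) (innerSupport c' z) := by
    ext y
    rw [sliceMap_innerSupport, sliceMap_innerSupport, sum_smul_eq_of_trilinear_eq h]
  have hlow := finrank_span_add_finrank_span_le a b (d := (⟪c ·, z⟫_ℝ)) (s := innerSupport c z)
    fun j hj => (mem_filter.mp hj).2
  rw [hslice] at hlow
  have := finrank_range_sliceMap_le a' b' (⟪c' ·, z⟫_ℝ) (innerSupport c' z)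
  have := ha.min_le_finrank_span_image (innerSupport c z)
  have := hb.min_le_finrank_span_image (innerSupport c z)
  have := card_le_univ (innerSupport c z)
  omega

end Slices

/-- If `#(I t) < #t`, the sets `I (insert α t) \ I t`, `α ∉ t`, are pairwise disjoint with at
least two elements each, which is too many for `ι`. -/
theorem Finset.card_eq_of_card_insert_eq {ι : Type*} [Fintype ι] [DecidableEq ι]
    (I : Finset ι → Finset ι) {t : Finset ι} (hmono : ∀ α ∉ t, I t ⊆ I (insert α t))
    (hinter : ∀ α ∉ t, ∀ β ∉ t, α ≠ β → I (insert α t) ∩ I (insert β t) ⊆ I t)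
    (hins : ∀ α ∉ t, #(I (insert α t)) = #t + 1) (hle : #(I t) ≤ #t)
    (ht : #t + 2 ≤ Fintype.card ι) : #(I t) = #t := by
  by_contra hne
  set new := fun α => I (insert α t) \ I t
  have hdisj : ((tᶜ : Finset ι) : Set ι).PairwiseDisjoint new := by
    intro α hα β hβ hαβ
    refine disjoint_left.mpr fun i hiα hiβ => (mem_sdiff.mp hiα).2 (hinter α (by simpa using hα)
      β (by simpa using hβ) hαβ (mem_inter.mpr ⟨(mem_sdiff.mp hiα).1, (mem_sdiff.mp hiβ).1⟩))
  have hcard : ∀ α ∈ tᶜ, #(new α) = #t + 1 - #(I t) := fun α hα => by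
    rw [card_sdiff_of_subset (hmono α (by simpa using hα)), hins α (by simpa using hα)]
  have hdisj' : Disjoint (I t) (tᶜ.biUnion new) := by
    simp only [disjoint_left, mem_biUnion, not_exists, not_and, new, mem_sdiff, not_not]
    exact fun _ hi _ _ _ => hi
  have htotal := card_le_univ (I t ∪ tᶜ.biUnion new)
  rw [card_union_of_disjoint hdisj', card_biUnion hdisj, sum_congr rfl hcard, sum_const,
    card_compl, smul_eq_mul] at htotal
  obtain ⟨X, hX⟩ : ∃ X, Fintype.card ι - #t = X + 1 := ⟨Fintype.card ι - #t - 1, by omega⟩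
  obtain ⟨D, hD⟩ : ∃ D, #t + 1 - #(I t) = D + 2 := ⟨#t - 1 - #(I t), by omega⟩
  rw [hX, hD] at htotal
  have hexpand : (X + 1) * (D + 2) = X * D + 2 * X + D + 2 := by ring
  omega

section Uniqueness

variable {ι E : Type*} [Fintype ι] [NormedAddCommGroup E] [InnerProductSpace ℝ E]
  {c c' : ι → E} {kc n : ℕ}

open Classical in
noncomputable def indicesInSpan (c' c : ι → E) (s : Finset ι) : Finset ι :=
  {i | c' i ∈ span ℝ (c '' s)}

theorem indicesInSpan_mono {s t : Finset ι} (hst : s ⊆ t) :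
    indicesInSpan c' c s ⊆ indicesInSpan c' c t := by
  intro i hi
  simp only [indicesInSpan, mem_filter, mem_univ, true_and] at hi ⊢
  exact span_mono (Set.image_mono (coe_subset.mpr hst)) hi

theorem indicesInSpan_inter [DecidableEq ι] (hc : KruskalIndependent ℝ kc c) {s t : Finset ι}
    (hst : #(s ∪ t) ≤ kc) :
    indicesInSpan c' c s ∩ indicesInSpan c' c t = indicesInSpan c' c (s ∩ t) := by
  have hli := hc _ hst
  rw [coe_union] at hli
  ext i
  simp only [indicesInSpan, mem_inter, mem_filter, mem_univ, true_and, coe_inter,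
    ← hli.span_image_inter, Submodule.mem_inf]

variable [FiniteDimensional ℝ E]

/-- Here `n` stands for `ka + kb` and `hsupp` is `card_innerSupport_le_of_trilinear_eq`. Padding `s`
to `t` with `2r + 1 - n ≤ #t`, a vector orthogonal to the `c' j`, `j ∈ t`, and generic for `c` is
orthogonal to at least `#t` of the `c j`, so these span a space of dimension `#t` inside the span of
the `c' j`, `j ∈ t`. -/
theorem KruskalIndependent.of_card_innerSupport_le (hc : KruskalIndependent ℝ kc c)
    (hsupp : ∀ z, #(innerSupport c' z) + Fintype.card ι < n →
      #(innerSupport c z) ≤ #(innerSupport c' z))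
    (hn : 2 * Fintype.card ι + 2 ≤ n + kc) (hkc : kc ≤ Fintype.card ι) :
    KruskalIndependent ℝ kc c' := by
  classical
  intro s hs
  obtain ⟨t, hst, ht⟩ := exists_superset_card_eq (le_max_left #s (2 * Fintype.card ι + 1 - n))
    (by omega)
  refine LinearIndepOn.mono ?_ (coe_subset.mpr hst)
  set W := span ℝ (c' '' t)
  obtain ⟨x, hxW, hx⟩ := W.exists_mem_orthogonal_card_innerSupport_add c
  have hx' := card_innerSupport_add_card_le (c := c') (z := x) (t := t) fun j hj =>
    inner_right_of_mem_orthogonal (K := W) (subset_span ⟨j, hj, rfl⟩) hxW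
  have := hsupp x (by omega)
  obtain ⟨u, hu, hut⟩ := exists_subset_card_eq (show #t ≤ #{j | c j ∈ W} by omega)
  have hfin : #t ≤ finrank ℝ W := by
    rw [← hut, ← hc.finrank_span_image (by omega)]
    refine Submodule.finrank_mono (span_le.mpr ?_)
    rintro _ ⟨j, hj, rfl⟩
    simpa using hu hj
  rw [LinearIndepOn, linearIndependent_iff_card_le_finrank_span, Set.finrank, ← Set.image_eq_range]
  simpa using hfin

theorem card_indicesInSpan_le (hc' : KruskalIndependent ℝ kc c') {s : Finset ι}
    (hs : #s < kc) : #(indicesInSpan c' c s) ≤ #s := by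
  classical
  exact (hc'.card_filter_mem_le _ ((finrank_span_image_le c s).trans_lt hs)).trans
    (finrank_span_image_le c s)

theorem le_card_indicesInSpan
    (hsupp : ∀ z, #(innerSupport c z) + Fintype.card ι < n →
      #(innerSupport c' z) ≤ #(innerSupport c z))
    {s : Finset ι} (hs : 2 * Fintype.card ι + 1 ≤ n + #s) : #s ≤ #(indicesInSpan c' c s) := by
  obtain ⟨x, hxW, hx⟩ := (span ℝ (c '' s)).exists_mem_orthogonal_card_innerSupport_add c'
  have := card_innerSupport_add_card_le (c := c) (z := x) (t := s) fun j hj =>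
    inner_right_of_mem_orthogonal (K := span ℝ (c '' s)) (subset_span ⟨j, hj, rfl⟩) hxW
  have := hsupp x (by omega)
  rw [indicesInSpan]
  omega

theorem card_indicesInSpan_eq (hc : KruskalIndependent ℝ kc c)
    (hc' : KruskalIndependent ℝ kc c')
    (hsupp : ∀ z, #(innerSupport c z) + Fintype.card ι < n →
      #(innerSupport c' z) ≤ #(innerSupport c z))
    (hn : 2 * Fintype.card ι + 2 ≤ n + kc) (hkc : kc ≤ Fintype.card ι) {s : Finset ι}
    (hs : #s < kc) : #(indicesInSpan c' c s) = #s := by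
  classical
  obtain ⟨d, hd⟩ : ∃ d, #s + d + 1 = kc := ⟨kc - #s - 1, by omega⟩
  induction d generalizing s with
  | zero =>
    exact le_antisymm (card_indicesInSpan_le hc' hs) (le_card_indicesInSpan hsupp (by omega))
  | succ d ih =>
    refine card_eq_of_card_insert_eq (indicesInSpan c' c) (fun α _ => indicesInSpan_mono
      (subset_insert α s)) (fun α hα β hβ hαβ => ?_) (fun α hα => ?_)
      (card_indicesInSpan_le hc' hs) (by omega)
    · have hinter : insert α s ∩ insert β s = s := by
        ext j
        simp only [mem_inter, mem_insert]
        grind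
      have hunion := card_union_add_card_inter (insert α s) (insert β s)
      rw [hinter, card_insert_of_notMem hα, card_insert_of_notMem hβ] at hunion
      rw [indicesInSpan_inter hc (by omega), hinter]
    · rw [ih (by rw [card_insert_of_notMem hα]; omega) (by rw [card_insert_of_notMem hα]; omega),
        card_insert_of_notMem hα]

/-- A form of Kruskal's permutation lemma. -/
theorem exists_perm_smul_of_card_innerSupport_le (hc : KruskalIndependent ℝ kc c)
    (hc' : KruskalIndependent ℝ kc c')
    (hsupp : ∀ z, #(innerSupport c z) + Fintype.card ι < n →
      #(innerSupport c' z) ≤ #(innerSupport c z))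
    (hn : 2 * Fintype.card ι + 2 ≤ n + kc) (hkc : kc ≤ Fintype.card ι) (hkc₂ : 2 ≤ kc) :
    ∃ (τ : Equiv.Perm ι) (γ : ι → ℝ), ∀ i, c' i = γ i • c (τ i) := by
  classical
  have hsingle : ∀ j, ∃ i, indicesInSpan c' c {j} = {i} := fun j => card_eq_one.mp <|
    (card_indicesInSpan_eq hc hc' hsupp hn hkc (by rw [card_singleton]; omega)).trans
      (card_singleton j)
  choose φ hφ using hsingle
  have hφ_inj : Function.Injective φ := by
    intro j₁ j₂ h
    by_contra hne
    have hmem : φ j₁ ∈ indicesInSpan c' c ({j₁} ∩ {j₂}) := by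
      rw [← indicesInSpan_inter hc ((card_union_le _ _).trans (by simpa using hkc₂)), hφ, hφ, h]
      simp
    simp [hne, indicesInSpan, hc'.ne_zero (by omega)] at hmem
  let τ := (Equiv.ofBijective φ hφ_inj.bijective_of_finite).symm
  have hmem : ∀ i, c' i ∈ ℝ ∙ c (τ i) := fun i => by
    have : φ (τ i) ∈ indicesInSpan c' c {τ i} := by simp [hφ]
    simpa [indicesInSpan, τ, Equiv.ofBijective_apply_symm_apply] using this
  choose γ hγ using fun i => mem_span_singleton.mp (hmem i)
  exact ⟨τ, γ, fun i => (hγ i).symm⟩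

end Uniqueness

section Kruskal

variable {ι E₁ E₂ E₃ : Type*} [Fintype ι]
  [NormedAddCommGroup E₁] [InnerProductSpace ℝ E₁]
  [NormedAddCommGroup E₂] [InnerProductSpace ℝ E₂] [FiniteDimensional ℝ E₂]
  [NormedAddCommGroup E₃] [InnerProductSpace ℝ E₃] [FiniteDimensional ℝ E₃]
  {a a' : ι → E₁} {b b' : ι → E₂} {c c' : ι → E₃} {ka kb kc : ℕ}

theorem KruskalIndependent.of_trilinear_eq (hc : KruskalIndependent ℝ kc c)
    (ha : KruskalIndependent ℝ ka a) (hb : KruskalIndependent ℝ kb b)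
    (hka : ka ≤ Fintype.card ι) (hkb : kb ≤ Fintype.card ι) (hkc : kc ≤ Fintype.card ι)
    (hsum : 2 * Fintype.card ι + 2 ≤ ka + kb + kc) (h : trilinear a b c = trilinear a' b' c') :
    KruskalIndependent ℝ kc c' :=
  hc.of_card_innerSupport_le (n := ka + kb)
    (fun _ hz => card_innerSupport_le_of_trilinear_eq ha hb hka hkb h hz) (by omega) hkc

theorem exists_perm_smul_third_of_trilinear_eq (ha' : KruskalIndependent ℝ ka a')
    (hb' : KruskalIndependent ℝ kb b') (hc : KruskalIndependent ℝ kc c)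
    (hc' : KruskalIndependent ℝ kc c')
    (hka : ka ≤ Fintype.card ι) (hkb : kb ≤ Fintype.card ι) (hkc : kc ≤ Fintype.card ι)
    (hsum : 2 * Fintype.card ι + 2 ≤ ka + kb + kc) (h : trilinear a b c = trilinear a' b' c') :
    ∃ (τ : Equiv.Perm ι) (γ : ι → ℝ), ∀ i, c' i = γ i • c (τ i) :=
  exists_perm_smul_of_card_innerSupport_le (n := ka + kb) hc hc'
    (fun _ hz => card_innerSupport_le_of_trilinear_eq ha' hb' hka hkb h.symm hz) (by omega) hkc
    (by omega)

/-- If `τ ≠ τ'`, pick `U ∋ p` with `π p ∉ U` for `π = τ' ∘ τ⁻¹`. Testing against `y ⊥ b '' Uᶜ` and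
`z ⊥ c '' π U`, both generic otherwise, kills every primed term, so the independent `a j`,
`j ∈ U`, force `U ⊆ π U`, which is absurd. -/
theorem perm_eq_of_trilinear_eq (ha : KruskalIndependent ℝ ka a)
    (hb : KruskalIndependent ℝ kb b) (hc : KruskalIndependent ℝ kc c)
    (hka : ka ≤ Fintype.card ι) (hkb : kb ≤ Fintype.card ι) (hkc : kc ≤ Fintype.card ι)
    (hsum : 2 * Fintype.card ι + 2 ≤ ka + kb + kc) (h : trilinear a b c = trilinear a' b' c')
    {τ τ' : Equiv.Perm ι} {β γ : ι → ℝ} (hb' : ∀ i, b' i = β i • b (τ i))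
    (hc' : ∀ i, c' i = γ i • c (τ' i)) : τ = τ' := by
  classical
  by_contra hne
  set π := τ.symm.trans τ'
  obtain ⟨p, hp⟩ : ∃ p, π p ≠ p := by
    by_contra! hfix
    exact hne (Equiv.ext fun i => by simpa [π] using (hfix (τ i)).symm)
  obtain ⟨U, hpU, hUp, hU⟩ := exists_subsuperset_card_eq (s := {p}) (t := {π p}ᶜ)
    (n := Fintype.card ι + 1 - kb) (by simpa using hp) (by simp; omega)
    (by rw [card_compl, card_singleton]; omega)
  obtain ⟨y, hy⟩ := hb.exists_inner_eq_zero_iff (s := Uᶜ) (by rw [card_compl]; omega)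
  obtain ⟨z, hz⟩ := hc.exists_inner_eq_zero_iff (s := U.map π.toEmbedding)
    (by rw [card_map]; omega)
  have hslice := sum_smul_eq_of_trilinear_eq h y z
  have hrhs : ∑ i, (⟪c' i, z⟫_ℝ * ⟪b' i, y⟫_ℝ) • a' i = 0 := sum_eq_zero fun i _ => by
    by_cases hi : τ i ∈ U
    · have : ⟪c (τ' i), z⟫_ℝ = 0 := (hz _).mpr (by
        convert mem_map_of_mem π.toEmbedding hi using 1
        simp [π])
      simp [hc', real_inner_smul_left, this]
    · have : ⟪b (τ i), y⟫_ℝ = 0 := (hy _).mpr (mem_compl.mpr hi)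
      simp [hb', real_inner_smul_left, this]
  have hlhs :
      ∑ j, (⟪c j, z⟫_ℝ * ⟪b j, y⟫_ℝ) • a j = ∑ j ∈ U, (⟪c j, z⟫_ℝ * ⟪b j, y⟫_ℝ) • a j :=
    (sum_subset (subset_univ U) fun j _ hj => by simp [(hy j).mpr (mem_compl.mpr hj)]).symm
  rw [hrhs, hlhs] at hslice
  have hsub : U ⊆ U.map π.toEmbedding := fun j hj => by
    rcases mul_eq_zero.mp (ha.eq_zero_of_sum_smul_eq_zero (by omega) hslice hj) with h0 | h0
    · exact (hz j).mp h0
    · exact absurd hj (mem_compl.mp ((hy j).mp h0))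
  have hπp : π p ∈ U := (eq_of_subset_of_card_le hsub (by rw [card_map])).symm ▸
    mem_map_of_mem _ (hpU (mem_singleton_self p))
  exact mem_compl.mp (hUp hπp) (mem_singleton_self _)

/-- Test against `y`, `z` such that `⟪b j, y⟫ ⟪c j, z⟫ = 0` exactly for `j ≠ τ i`. -/
theorem mul_mul_eq_one_of_trilinear_eq (ha : KruskalIndependent ℝ ka a)
    (hb : KruskalIndependent ℝ kb b) (hc : KruskalIndependent ℝ kc c)
    (hka : ka ≤ Fintype.card ι) (hkb : kb ≤ Fintype.card ι) (hkc : kc ≤ Fintype.card ι)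
    (hsum : 2 * Fintype.card ι + 2 ≤ ka + kb + kc) (h : trilinear a b c = trilinear a' b' c')
    {τ : Equiv.Perm ι} {α β γ : ι → ℝ} (ha' : ∀ i, a' i = α i • a (τ i))
    (hb' : ∀ i, b' i = β i • b (τ i)) (hc' : ∀ i, c' i = γ i • c (τ i)) (i : ι) :
    α i * β i * γ i = 1 := by
  classical
  obtain ⟨Y, hY, hYcard⟩ := exists_subset_card_eq (s := {τ i}ᶜ) (n := kb - 1)
    (by rw [card_compl, card_singleton]; omega)
  have hiY : τ i ∉ Y := fun hi => mem_compl.mp (hY hi) (mem_singleton_self _)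
  obtain ⟨y, hy⟩ := hb.exists_inner_eq_zero_iff (s := Y) (by omega)
  obtain ⟨z, hz⟩ := hc.exists_inner_eq_zero_iff (s := (insert (τ i) Y)ᶜ)
    (by rw [card_compl, card_insert_of_notMem hiY]; omega)
  have hzero : ∀ j, j ≠ τ i → ⟪c j, z⟫_ℝ * ⟪b j, y⟫_ℝ = 0 := fun j hj => by
    by_cases hjY : j ∈ Y
    · simp [(hy j).mpr hjY]
    · simp [(hz j).mpr (by simp [hj, hjY])]
  have hX : ⟪c (τ i), z⟫_ℝ * ⟪b (τ i), y⟫_ℝ ≠ 0 :=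
    mul_ne_zero (by simp [hz]) (by simpa [hy] using hiY)
  have hslice := sum_smul_eq_of_trilinear_eq h y z
  rw [sum_eq_single (τ i) (fun j _ hj => by rw [hzero j hj, zero_smul]) (by simp),
    sum_eq_single i (fun j _ hj => by
      rw [hb', hc', real_inner_smul_left, real_inner_smul_left, mul_mul_mul_comm,
        hzero _ (τ.injective.ne hj), mul_zero, zero_smul]) (by simp),
    ha', hb', hc', real_inner_smul_left, real_inner_smul_left, smul_smul, ← sub_eq_zero,
    ← sub_smul] at hslice
  have := (smul_eq_zero.mp hslice).resolve_right (ha.ne_zero (by omega) (τ i))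
  apply mul_right_cancel₀ hX
  linear_combination -this

theorem exists_perm_smul_of_trilinear_eq [FiniteDimensional ℝ E₁] (ha : KruskalIndependent ℝ ka a)
    (hb : KruskalIndependent ℝ kb b) (hc : KruskalIndependent ℝ kc c)
    (hka : ka ≤ Fintype.card ι) (hkb : kb ≤ Fintype.card ι) (hkc : kc ≤ Fintype.card ι)
    (hsum : 2 * Fintype.card ι + 2 ≤ ka + kb + kc) (h : trilinear a b c = trilinear a' b' c') :
    ∃ (τ : Equiv.Perm ι) (α β γ : ι → ℝ), (∀ i, α i * β i * γ i = 1) ∧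
      (∀ i, a' i = α i • a (τ i)) ∧ (∀ i, b' i = β i • b (τ i)) ∧ ∀ i, c' i = γ i • c (τ i) := by
  have h₂ := trilinear_rotate_eq h
  have h₃ := trilinear_rotate_eq h₂
  have hc' := hc.of_trilinear_eq ha hb hka hkb hkc hsum h
  have ha' := ha.of_trilinear_eq hb hc hkb hkc hka (by omega) h₂
  have hb' := hb.of_trilinear_eq hc ha hkc hka hkb (by omega) h₃
  obtain ⟨τ, γ, hγ⟩ := exists_perm_smul_third_of_trilinear_eq ha' hb' hc hc' hka hkb hkc hsum h
  obtain ⟨τa, α, hα⟩ :=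
    exists_perm_smul_third_of_trilinear_eq hb' hc' ha ha' hkb hkc hka (by omega) h₂
  obtain ⟨τb, β, hβ⟩ :=
    exists_perm_smul_third_of_trilinear_eq hc' ha' hb hb' hkc hka hkb (by omega) h₃
  obtain rfl := perm_eq_of_trilinear_eq ha hb hc hka hkb hkc hsum h hβ hγ
  obtain rfl := perm_eq_of_trilinear_eq hb hc ha hkb hkc hka (by omega) h₂ hγ hα
  exact ⟨τb, α, β, γ, mul_mul_eq_one_of_trilinear_eq ha hb hc hka hkb hkc hsum h hα hβ hγ,
    hα, hβ, hγ⟩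

end Kruskal

section Matrix

variable {m n : Type*}

def rows (N : Matrix m n ℝ) (i : m) : EuclideanSpace ℝ n := WithLp.toLp 2 (N i)

theorem kruskalRank_spec {r κ : ℕ} (N : Matrix (Fin r) (Fin κ) ℝ) :
    kruskalRank N ≤ r ∧ ∀ s : Finset (Fin r), #s = kruskalRank N →
      LinearIndependent ℝ (fun i : s => N i) := by
  refine Nat.sSup_mem (s := {j | j ≤ r ∧ ∀ s : Finset (Fin r), #s = j →
    LinearIndependent ℝ fun i : s => N i}) ⟨0, Nat.zero_le r, fun s hs => ?_⟩ ⟨r, fun _ hj => hj.1⟩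
  rw [card_eq_zero.mp hs]
  exact linearIndependent_empty_type

theorem kruskalIndependent_rows {r κ : ℕ} (N : Matrix (Fin r) (Fin κ) ℝ) :
    KruskalIndependent ℝ (kruskalRank N) (rows N) := by
  intro s hs
  obtain ⟨t, hst, ht⟩ := exists_superset_card_eq hs (by simpa using (kruskalRank_spec N).1)
  refine LinearIndepOn.mono ?_ (coe_subset.mpr hst)
  exact ((kruskalRank_spec N).2 t ht).map' (WithLp.linearEquiv 2 ℝ (Fin κ → ℝ)).symm.toLinearMap
    (LinearEquiv.ker _)

theorem trilinear_rows {r κ₁ κ₂ κ₃ : ℕ} (N₁ : Matrix (Fin r) (Fin κ₁) ℝ)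
    (N₂ : Matrix (Fin r) (Fin κ₂) ℝ) (N₃ : Matrix (Fin r) (Fin κ₃) ℝ)
    (x : EuclideanSpace ℝ (Fin κ₁)) (y : EuclideanSpace ℝ (Fin κ₂))
    (z : EuclideanSpace ℝ (Fin κ₃)) :
    trilinear (rows N₁) (rows N₂) (rows N₃) x y z =
      ∑ k₁, ∑ k₂, ∑ k₃, tripleProd N₁ N₂ N₃ k₁ k₂ k₃ * x k₁ * y k₂ * z k₃ := by
  simp only [trilinear, tripleProd, rows, PiLp.inner_apply, RCLike.inner_apply, conj_trivial,
    sum_mul, mul_sum]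
  simp_rw [sum_comm (β := ℝ) (s := (univ : Finset (Fin κ₃))) (t := (univ : Finset (Fin κ₂))),
    sum_comm (β := ℝ) (s := (univ : Finset (Fin κ₃))) (t := (univ : Finset (Fin κ₁))),
    sum_comm (β := ℝ) (s := (univ : Finset (Fin κ₂))) (t := (univ : Finset (Fin κ₁))),
    sum_comm (β := ℝ) (s := (univ : Finset (Fin r))) (t := (univ : Finset (Fin κ₁))),
    sum_comm (β := ℝ) (s := (univ : Finset (Fin r))) (t := (univ : Finset (Fin κ₂))),
    sum_comm (β := ℝ) (s := (univ : Finset (Fin r))) (t := (univ : Finset (Fin κ₃)))]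
  refine sum_congr rfl fun _ _ => sum_congr rfl fun _ _ => sum_congr rfl fun _ _ =>
    sum_congr rfl fun _ _ => by ring

theorem eq_permMatrix_mul_diagonal_mul {r κ : ℕ} {N N' : Matrix (Fin r) (Fin κ) ℝ}
    {σ : Equiv.Perm (Fin r)} {D : Fin r → ℝ} (h : ∀ i, rows N' i = D i • rows N (σ i)) :
    N' = permMatrix σ * Matrix.diagonal (D ∘ σ.symm) * N := by
  have hσ : permMatrix σ = σ.toPEquiv.toMatrix := by
    ext i j
    simp [permMatrix, PEquiv.toMatrix_apply]
  ext i k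
  rw [hσ, Matrix.mul_assoc, PEquiv.toMatrix_toPEquiv_mul, Matrix.submatrix_apply,
    Matrix.diagonal_mul]
  simpa [rows] using congrArg (· k) (h i)

end Matrix

theorem kruskal_theorem_general {r κ₁ κ₂ κ₃ : ℕ}
    (N₁ N₁' : Matrix (Fin r) (Fin κ₁) ℝ) (N₂ N₂' : Matrix (Fin r) (Fin κ₂) ℝ)
    (N₃ N₃' : Matrix (Fin r) (Fin κ₃) ℝ)
    (hrank : kruskalRank N₁ + kruskalRank N₂ + kruskalRank N₃ ≥ 2 * r + 2)
    (heq : tripleProd N₁ N₂ N₃ = tripleProd N₁' N₂' N₃') :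
    ∃ (σ : Equiv.Perm (Fin r)) (D₁ D₂ D₃ : Fin r → ℝ),
      Matrix.diagonal D₁ * Matrix.diagonal D₂ * Matrix.diagonal D₃ = 1 ∧
      N₁' = permMatrix σ * Matrix.diagonal D₁ * N₁ ∧
      N₂' = permMatrix σ * Matrix.diagonal D₂ * N₂ ∧
      N₃' = permMatrix σ * Matrix.diagonal D₃ * N₃ := by
  have htri : trilinear (rows N₁) (rows N₂) (rows N₃) =
      trilinear (rows N₁') (rows N₂') (rows N₃') := by
    funext x y z
    rw [trilinear_rows, trilinear_rows, heq]
  obtain ⟨τ, α, β, γ, hαβγ, hα, hβ, hγ⟩ := exists_perm_smul_of_trilinear_eq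
    (kruskalIndependent_rows N₁) (kruskalIndependent_rows N₂) (kruskalIndependent_rows N₃)
    (by simpa using (kruskalRank_spec N₁).1) (by simpa using (kruskalRank_spec N₂).1)
    (by simpa using (kruskalRank_spec N₃).1) (by simpa using hrank) htri
  refine ⟨τ, α ∘ τ.symm, β ∘ τ.symm, γ ∘ τ.symm, ?_, eq_permMatrix_mul_diagonal_mul hα,
    eq_permMatrix_mul_diagonal_mul hβ, eq_permMatrix_mul_diagonal_mul hγ⟩
  rw [Matrix.diagonal_mul_diagonal, Matrix.diagonal_mul_diagonal, ← Matrix.diagonal_one]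
  exact congrArg Matrix.diagonal (funext fun j => hαβγ (τ.symm j))

/-- Kruskal's theorem. -/
theorem kruskal_theorem {r κ₁ κ₂ κ₃ : ℕ} (hr : 0 < r) (hκ₁ : 0 < κ₁) (hκ₂ : 0 < κ₂)
    (hκ₃ : 0 < κ₃)
    (N₁ N₁' : Matrix (Fin r) (Fin κ₁) ℝ) (N₂ N₂' : Matrix (Fin r) (Fin κ₂) ℝ)
    (N₃ N₃' : Matrix (Fin r) (Fin κ₃) ℝ)
    (hrank : kruskalRank N₁ + kruskalRank N₂ + kruskalRank N₃ ≥ 2 * r + 2)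
    (heq : tripleProd N₁ N₂ N₃ = tripleProd N₁' N₂' N₃') :
    ∃ (σ : Equiv.Perm (Fin r)) (D₁ D₂ D₃ : Fin r → ℝ),
      Matrix.diagonal D₁ * Matrix.diagonal D₂ * Matrix.diagonal D₃ = 1 ∧
      N₁' = permMatrix σ * Matrix.diagonal D₁ * N₁ ∧
      N₂' = permMatrix σ * Matrix.diagonal D₂ * N₂ ∧
      N₃' = permMatrix σ * Matrix.diagonal D₃ * N₃ :=
  kruskal_theorem_general N₁ N₁' N₂ N₂' N₃ N₃' hrank heq
end

section
/- Let r, κ be positive integers. Consider parameters consisting of a row vector v ∈ ℝ^r, r × r Markov matrices M₃, M₆, M₉, and r × κ Markov matrices M₁, M₂, M₄, M₅, M₇, M₈, and define the associated 6-dimensional κ×κ×κ×κ×κ×κ joint distribution tensor by P(x₁,…,x₆) = ∑_{u,u',a,b ∈ [r]} v(u)·M₃(u,a)·M₁(a,x₁)·M₂(a,x₂)·M₇(u,x₅)·M₉(u,u')·M₆(u',b)·M₄(b,x₃)·M₅(b,x₄)·M₈(u',x₆). Suppose the parameters satisfy: (1) all entries of v and of v' = vM₉ are positive; (2) the four matrices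 M₆(M₄ ⊗row M₅), M₉M₆(M₄ ⊗row M₅), M₃(M₁ ⊗row M₂), and M₉'M₃(M₁ ⊗row M₂), where M₉' = diag(v')⁻¹ M₉ᵀ diag(v), all have rank r; (3) the Kruskal ranks of M₇ and M₈ are at least 2. Then if a second parameter tuple (w, N₁,…,N₉) also satisfies conditions (1)–(3) and yields the same joint distribution tensor, there exist r × r permutation matrices P₁ and P₂ such that N₉ = P₁ᵀ M₉ P₂, N₇ = P₁ᵀ M₇, and w = v P₁. -/
open Matrix

/-- A Markov matrix: non-negative entries, each row summing to 1. -/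
def IsMarkov {m κ : ℕ} (M : Matrix (Fin m) (Fin κ) ℝ) : Prop :=
  (∀ i j, 0 ≤ M i j) ∧ ∀ i, ∑ j, M i j = 1

/-- The row-wise tensor product of two matrices. -/
def rowTensor {r s t : ℕ} (N₁ : Matrix (Fin r) (Fin s) ℝ) (N₂ : Matrix (Fin r) (Fin t) ℝ) :
    Matrix (Fin r) (Fin s × Fin t) ℝ :=
  Matrix.of fun i p => N₁ i p.1 * N₂ i p.2

/-- The joint distribution tensor of the Markov model on the 6-leaf tree of
Figure 1, with root distribution `v` at the internal node `ρ`. -/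
def jointDist {r κ : ℕ} (v : Fin r → ℝ)
    (M₁ M₂ : Matrix (Fin r) (Fin κ) ℝ) (M₃ : Matrix (Fin r) (Fin r) ℝ)
    (M₄ M₅ : Matrix (Fin r) (Fin κ) ℝ) (M₆ : Matrix (Fin r) (Fin r) ℝ)
    (M₇ M₈ : Matrix (Fin r) (Fin κ) ℝ) (M₉ : Matrix (Fin r) (Fin r) ℝ) :
    Fin κ → Fin κ → Fin κ → Fin κ → Fin κ → Fin κ → ℝ :=
  fun x₁ x₂ x₃ x₄ x₅ x₆ =>
    ∑ u : Fin r, ∑ u' : Fin r, ∑ a : Fin r, ∑ b : Fin r,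
      v u * M₃ u a * M₁ a x₁ * M₂ a x₂ * M₇ u x₅ * M₉ u u' *
        M₆ u' b * M₄ b x₃ * M₅ b x₄ * M₈ u' x₆

/-- The technical conditions (1)-(3) on the parameters of the 6-leaf tree model. -/
def GoodParams {r κ : ℕ} (v : Fin r → ℝ)
    (M₁ M₂ : Matrix (Fin r) (Fin κ) ℝ) (M₃ : Matrix (Fin r) (Fin r) ℝ)
    (M₄ M₅ : Matrix (Fin r) (Fin κ) ℝ) (M₆ : Matrix (Fin r) (Fin r) ℝ)
    (M₇ M₈ : Matrix (Fin r) (Fin κ) ℝ) (M₉ : Matrix (Fin r) (Fin r) ℝ) : Prop :=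
  (∀ u, 0 < v u) ∧ (∀ u, 0 < Matrix.vecMul v M₉ u) ∧
  (M₆ * rowTensor M₄ M₅).rank = r ∧
  (M₉ * M₆ * rowTensor M₄ M₅).rank = r ∧
  (M₃ * rowTensor M₁ M₂).rank = r ∧
  ((Matrix.diagonal (Matrix.vecMul v M₉))⁻¹ * M₉ᵀ * Matrix.diagonal v *
      (M₃ * rowTensor M₁ M₂)).rank = r ∧
  2 ≤ kruskalRank M₇ ∧ 2 ≤ kruskalRank M₈

/-!
Summing out one leaf turns the joint distribution into a weighted three-way tensor
`∑ u, v u * A u i * B u j * C u x` in which `A` and `B` have full row rank and `C` has distinct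
rows, and such a decomposition is unique up to relabelling the hidden states. Indeed, multiplying
the slice identities `Aᵀ diag(v · C(·, x)) B = A'ᵀ diag(w · C'(·, x)) B'` by a left inverse of
`Aᵀ` and a right inverse of `B` gives `diag(v · C(·, x)) = E diag(w · C'(·, x)) F`, where summing
over `x` shows `E` and `F` invertible. Hence `E` intertwines `diag(C(·, x))` with
`diag(C'(·, x))` for every `x`; as the rows of `C'` are distinct, `E` is monomial, and stochastic
rows force its nonzero entries to be `1`.

Summing out leaf 6 identifies the states at `ρ`, hence `v`, `M₇` and `M₉ M₆ (M₄ ⊗row M₅)`;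
summing out leaf 5 and re-rooting at `ρ'` identifies the states at `ρ'`, hence `M₆ (M₄ ⊗row M₅)`.
Cancelling this full-rank factor recovers `M₉`.
-/

section LinearAlgebra

variable {K : Type*} [Field K] {m : Type*}

theorem sum_apply_eq_one_of_mulVec_one {n : Type*} [Fintype n] {A : Matrix m n K}
    (hA : A *ᵥ 1 = 1) (u : m) : ∑ i, A u i = 1 :=
  (dotProduct_one (A u)).symm.trans (congrFun hA u)

theorem sum_diagonal_mul_eq_diagonal [DecidableEq m] {U : Type*} [Fintype U] (v : m → K)
    {C : Matrix m U K} (hC : C *ᵥ 1 = 1) :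
    ∑ x, diagonal (fun u => v u * C u x) = diagonal v := by
  calc ∑ x, diagonal (fun u => v u * C u x) = diagonal (∑ x, fun u => v u * C u x) :=
        (map_sum (diagonalAddMonoidHom m K) _ _).symm
    _ = diagonal v := congrArg diagonal <| funext fun u => by
        simp [← Finset.mul_sum, sum_apply_eq_one_of_mulVec_one hC u]

variable [Fintype m]

theorem mul_mulVec_one {n l : Type*} [Fintype n] {X : Matrix l m K} {Y : Matrix m n K}
    (hX : X *ᵥ 1 = 1) (hY : Y *ᵥ 1 = 1) : (X * Y) *ᵥ 1 = 1 := by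
  rw [← mulVec_mulVec, hY, hX]

theorem mul_monomial_apply {E : Matrix m m K} {σ : Equiv.Perm m}
    (hE : ∀ u u', E u u' ≠ 0 → u' = σ u) {l : Type*} (X : Matrix l m K) (i : l) (u : m) :
    (X * E) i (σ u) = X i u * E u (σ u) := by
  rw [mul_apply, Finset.sum_eq_single u (fun b _ hb => ?_) (by simp)]
  rw [of_not_not fun h => hb (σ.injective (hE b _ h)).symm, mul_zero]

theorem monomial_mul_apply {E : Matrix m m K} {σ : Equiv.Perm m}
    (hE : ∀ u u', E u u' ≠ 0 → u' = σ u) {n : Type*} (Y : Matrix m n K) (u : m) (j : n) :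
    (E * Y) u j = E u (σ u) * Y (σ u) j := by
  rw [mul_apply, Finset.sum_eq_single (σ u) (fun b _ hb => ?_) (by simp)]
  rw [of_not_not fun h => hb (hE u b h), zero_mul]

variable [DecidableEq m]

theorem exists_mul_eq_one_of_rank_eq {n : Type*} [Fintype n] {A : Matrix m n K}
    (hA : A.rank = Fintype.card m) : ∃ B : Matrix n m K, A * B = 1 := by
  refine mulVec_surjective_iff_exists_right_inverse.mp fun y => ?_
  have : LinearMap.range A.mulVecLin = ⊤ := Submodule.eq_top_of_finrank_eq <| by
    rw [← Matrix.rank, hA, Module.finrank_fintype_fun_eq_card]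
  exact LinearMap.range_eq_top.mp this y

theorem mul_right_cancel_of_rank_eq {n l : Type*} [Fintype n] {B : Matrix m n K}
    (hB : B.rank = Fintype.card m) {X Y : Matrix l m K} (h : X * B = Y * B) : X = Y := by
  obtain ⟨R, hR⟩ := exists_mul_eq_one_of_rank_eq hB
  simpa only [Matrix.mul_assoc, hR, Matrix.mul_one] using congrArg (· * R) h

theorem eq_submatrix_of_mul_eq {n : Type*} [Fintype n] {X Y : Matrix m m K}
    {B B' : Matrix m n K} {π₁ π₂ : Equiv.Perm m} (hB' : B'.rank = Fintype.card m)
    (h₁ : (X * B).submatrix π₁ id = Y * B') (h₂ : B.submatrix π₂ id = B') :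
    Y = X.submatrix π₁ π₂ := by
  refine mul_right_cancel_of_rank_eq hB' ?_
  rw [← h₁, ← h₂, submatrix_mul_equiv]

theorem exists_perm_forall_apply_ne_zero_of_det_ne_zero {E : Matrix m m K} (hE : E.det ≠ 0) :
    ∃ σ : Equiv.Perm m, ∀ u, E u (σ u) ≠ 0 := by
  rw [← det_transpose, det_apply'] at hE
  obtain ⟨σ, -, hσ⟩ := Finset.exists_ne_zero_of_sum_ne_zero hE
  exact ⟨σ, fun u => Finset.prod_ne_zero_iff.mp (right_ne_zero_of_mul hσ) u (Finset.mem_univ u)⟩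

theorem isUnit_det_diagonal {d : m → K} (hd : ∀ u, d u ≠ 0) : IsUnit (diagonal d).det := by
  rw [det_diagonal]
  exact isUnit_iff_ne_zero.mpr (Finset.prod_ne_zero_iff.mpr fun u _ => hd u)

/-- The matrix `M₉'` of the paper: the transition matrix of the edge `P` read backwards, when
its source has distribution `v`. -/
noncomputable def timeReversal (v : m → K) (P : Matrix m m K) : Matrix m m K :=
  (diagonal (v ᵥ* P))⁻¹ * Pᵀ * diagonal v

theorem timeReversal_mulVec_one {v : m → K} {P : Matrix m m K} (h : ∀ u, (v ᵥ* P) u ≠ 0) :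
    timeReversal v P *ᵥ 1 = 1 := by
  have hdiag : ∀ d : m → K, diagonal d *ᵥ 1 = d := fun d => by ext; simp [mulVec_diagonal]
  rw [timeReversal, ← mulVec_mulVec, ← mulVec_mulVec, hdiag, mulVec_transpose]
  nth_rw 2 [← hdiag (v ᵥ* P)]
  rw [mulVec_mulVec, nonsing_inv_mul _ (isUnit_det_diagonal h), one_mulVec]

theorem vecMul_apply_mul_timeReversal_mul_apply {n : Type*} [Fintype n] {v : m → K}
    {P : Matrix m m K} (h : ∀ u, (v ᵥ* P) u ≠ 0) (A : Matrix m n K) (u' : m) (i : n) :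
    (v ᵥ* P) u' * (timeReversal v P * A) u' i = ∑ u, v u * P u u' * A u i := by
  rw [← diagonal_mul, timeReversal, Matrix.mul_assoc, Matrix.mul_assoc,
    mul_nonsing_inv_cancel_left _ _ (isUnit_det_diagonal h), ← Matrix.mul_assoc, mul_apply]
  simp only [mul_diagonal, transpose_apply]
  exact Finset.sum_congr rfl fun u _ => by ring

end LinearAlgebra

section CPDecomposition

variable {K : Type*} [Field K] {m S T U : Type*} [Fintype m]

def cpTensor (v : m → K) (A : Matrix m S K) (B : Matrix m T K) (C : Matrix m U K) :
    S → T → U → K :=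
  fun i j x => ∑ u, v u * A u i * B u j * C u x

variable [DecidableEq m]

theorem cpTensor_apply_eq_mul (v : m → K) (A : Matrix m S K) (B : Matrix m T K)
    (C : Matrix m U K) (i : S) (j : T) (x : U) :
    cpTensor v A B C i j x = (Aᵀ * diagonal (fun u => v u * C u x) * B) i j := by
  rw [mul_apply]
  simp only [cpTensor, mul_diagonal, transpose_apply]
  exact Finset.sum_congr rfl fun u _ => by ring

theorem exists_perm_of_diagonal_mul_eq_mul_diagonal {C C' : Matrix m U K}
    (hC' : Function.Injective C') {E : Matrix m m K} (hE : E.det ≠ 0)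
    (h : ∀ x, diagonal (fun u => C u x) * E = E * diagonal (fun u => C' u x)) :
    ∃ σ : Equiv.Perm m,
      (∀ u u', E u u' ≠ 0 → u' = σ u) ∧ ∀ u, C' (σ u) = C u := by
  have hrow : ∀ u u', E u u' ≠ 0 → C' u' = C u := fun u u' hu => funext fun x => by
    have := congrFun (congrFun (h x) u) u'
    rw [diagonal_mul, mul_diagonal, mul_comm] at this
    exact (mul_left_cancel₀ hu this).symm
  obtain ⟨σ, hσ⟩ := exists_perm_forall_apply_ne_zero_of_det_ne_zero hE
  exact ⟨σ, fun u u' hu => hC' ((hrow u u' hu).trans (hrow u _ (hσ u)).symm),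
    fun u => hrow u _ (hσ u)⟩

variable {v w : m → K} {A A' : Matrix m S K} {B B' : Matrix m T K} {C C' : Matrix m U K}

theorem slice_eq_of_cpTensor_eq (h : cpTensor v A B C = cpTensor w A' B' C') (x : U) :
    Aᵀ * diagonal (fun u => v u * C u x) * B = A'ᵀ * diagonal (fun u => w u * C' u x) * B' :=
  Matrix.ext fun i j => by rw [← cpTensor_apply_eq_mul, ← cpTensor_apply_eq_mul, h]

variable [Fintype U]

theorem marginal_eq_of_cpTensor_eq (hC : C *ᵥ 1 = 1) (hC' : C' *ᵥ 1 = 1)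
    (h : cpTensor v A B C = cpTensor w A' B' C') :
    Aᵀ * diagonal v * B = A'ᵀ * diagonal w * B' := by
  rw [← sum_diagonal_mul_eq_diagonal v hC, ← sum_diagonal_mul_eq_diagonal w hC', Matrix.mul_sum,
    Matrix.sum_mul, Matrix.mul_sum, Matrix.sum_mul]
  exact Finset.sum_congr rfl fun x _ => slice_eq_of_cpTensor_eq h x

variable [Fintype S] [Fintype T]

theorem exists_transition_of_cpTensor_eq (hv : ∀ u, v u ≠ 0)
    (hA : A.rank = Fintype.card m) (hB : B.rank = Fintype.card m)
    (hC : C *ᵥ 1 = 1) (hC' : C' *ᵥ 1 = 1) (h : cpTensor v A B C = cpTensor w A' B' C') :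
    ∃ E : Matrix m m K, E.det ≠ 0 ∧
      (∀ x, diagonal (fun u => C u x) * E = E * diagonal (fun u => C' u x)) ∧
      A'ᵀ = Aᵀ * E ∧ diagonal v * B = E * diagonal w * B' := by
  obtain ⟨L, hL⟩ := exists_mul_eq_one_of_rank_eq hA
  obtain ⟨R, hR⟩ := exists_mul_eq_one_of_rank_eq hB
  replace hL : Lᵀ * Aᵀ = 1 := by rw [← transpose_mul, hL, transpose_one]
  have hslice := slice_eq_of_cpTensor_eq h
  have hsum := marginal_eq_of_cpTensor_eq hC hC' h
  have hcancel : ∀ D : Matrix m m K, Lᵀ * (Aᵀ * D * B) * R = D := fun D => by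
    rw [← Matrix.mul_assoc, ← Matrix.mul_assoc, hL, Matrix.one_mul, Matrix.mul_assoc, hR,
      Matrix.mul_one]
  set E := Lᵀ * A'ᵀ
  set G := diagonal w * (B' * R)
  have hslice' : ∀ x, diagonal (fun u => v u * C u x)
      = E * diagonal (fun u => w u * C' u x) * (B' * R) := fun x => by
    rw [← hcancel (diagonal _), hslice]; simp only [E, Matrix.mul_assoc]
  have hEG : diagonal v = E * G := by
    rw [← hcancel (diagonal v), hsum]; simp only [E, G, Matrix.mul_assoc]
  have hdet : E.det * G.det ≠ 0 := by
    rw [← det_mul, ← hEG]; exact (isUnit_det_diagonal hv).ne_zero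
  have hG : G.rank = Fintype.card m := rank_of_isUnit G <|
    (isUnit_iff_isUnit_det G).mpr (isUnit_iff_ne_zero.mpr (right_ne_zero_of_mul hdet))
  refine ⟨E, left_ne_zero_of_mul hdet, fun x => mul_right_cancel_of_rank_eq hG ?_,
    mul_right_cancel_of_rank_eq hG ?_, ?_⟩
  · calc diagonal (fun u => C u x) * E * G = diagonal (fun u => v u * C u x) := by
          rw [Matrix.mul_assoc, ← hEG, diagonal_mul_diagonal]; simp_rw [mul_comm]
      _ = E * diagonal (fun u => C' u x) * G := by
          rw [hslice']
          simp only [G, Matrix.mul_assoc, ← Matrix.mul_assoc (diagonal _) (diagonal w),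
            diagonal_mul_diagonal, mul_comm (C' _ x)]
  · calc A'ᵀ * G = Aᵀ * diagonal v * B * R := by rw [hsum]; simp only [G, Matrix.mul_assoc]
      _ = Aᵀ * E * G := by
          rw [Matrix.mul_assoc _ B, hR, Matrix.mul_one, hEG]
          exact (Matrix.mul_assoc _ _ _).symm
  · calc diagonal v * B = Lᵀ * (Aᵀ * diagonal v * B) := by
          rw [Matrix.mul_assoc, ← Matrix.mul_assoc Lᵀ, hL, Matrix.one_mul]
      _ = E * diagonal w * B' := by rw [hsum]; simp only [E, Matrix.mul_assoc]

theorem cpTensor_unique (hv : ∀ u, v u ≠ 0)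
    (hA : A.rank = Fintype.card m) (hB : B.rank = Fintype.card m)
    (hA₁ : A *ᵥ 1 = 1) (hA'₁ : A' *ᵥ 1 = 1) (hB₁ : B *ᵥ 1 = 1) (hB'₁ : B' *ᵥ 1 = 1)
    (hC₁ : C *ᵥ 1 = 1) (hC'₁ : C' *ᵥ 1 = 1) (hC' : Function.Injective C')
    (h : cpTensor v A B C = cpTensor w A' B' C') :
    ∃ σ : Equiv.Perm m, w ∘ σ = v ∧ A'.submatrix σ id = A ∧ B'.submatrix σ id = B ∧
      C'.submatrix σ id = C := by
  obtain ⟨E, hE, hcomm, hAE, hBE⟩ := exists_transition_of_cpTensor_eq hv hA hB hC₁ hC'₁ h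
  obtain ⟨σ, hsupp, hCσ⟩ := exists_perm_of_diagonal_mul_eq_mul_diagonal hC' hE hcomm
  have hA' : ∀ u i, A' (σ u) i = A u i * E u (σ u) := fun u i => by
    simpa [mul_monomial_apply hsupp] using congrFun (congrFun hAE i) (σ u)
  have hE₁ : ∀ u, E u (σ u) = 1 := fun u => by
    simpa [hA', ← Finset.sum_mul, sum_apply_eq_one_of_mulVec_one hA₁] using
      sum_apply_eq_one_of_mulVec_one hA'₁ (σ u)
  have hB' : ∀ u j, v u * B u j = w (σ u) * B' (σ u) j := fun u j => by
    simpa [Matrix.mul_assoc, monomial_mul_apply hsupp, hE₁] using congrFun (congrFun hBE u) j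
  have hw : ∀ u, w (σ u) = v u := fun u => by
    simpa [← Finset.mul_sum, sum_apply_eq_one_of_mulVec_one hB₁,
      sum_apply_eq_one_of_mulVec_one hB'₁] using
      (Finset.sum_congr (s₁ := Finset.univ) rfl fun j _ => hB' u j).symm
  refine ⟨σ, funext hw, ?_, ?_, ?_⟩ <;> ext u i
  · simp [hA', hE₁]
  · simpa [hw, (hv u)] using (hB' u i).symm
  · simp [hCσ]

end CPDecomposition

section SixLeafTree

theorem IsMarkov.mulVec_one {m κ : ℕ} {M : Matrix (Fin m) (Fin κ) ℝ} (hM : IsMarkov M) :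
    M *ᵥ 1 = 1 :=
  funext fun i => (dotProduct_one (M i)).trans (hM.2 i)

theorem rowTensor_mulVec_one {r s t : ℕ} {Y : Matrix (Fin r) (Fin s) ℝ}
    {Z : Matrix (Fin r) (Fin t) ℝ} (hY : Y *ᵥ 1 = 1) (hZ : Z *ᵥ 1 = 1) :
    rowTensor Y Z *ᵥ 1 = 1 := by
  ext i
  simpa [rowTensor, mulVec, dotProduct_one, Fintype.sum_prod_type, ← Finset.sum_mul_sum] using
    congrArg₂ (· * ·) (congrFun hY i) (congrFun hZ i)

theorem injective_of_two_le_kruskalRank {r κ : ℕ} {N : Matrix (Fin r) (Fin κ) ℝ}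
    (h : 2 ≤ kruskalRank N) : Function.Injective N := by
  classical
  intro u₁ u₂ hN
  by_contra hne
  obtain ⟨hle, hind⟩ : kruskalRank N ∈ {j | j ≤ r ∧ ∀ s : Finset (Fin r), s.card = j →
      LinearIndependent ℝ (fun i : s => N (i : Fin r))} := by
    refine Nat.sSup_mem ⟨0, Nat.zero_le r, fun s hs => ?_⟩ ⟨r, fun j hj => hj.1⟩
    rw [Finset.card_eq_zero.mp hs]
    exact linearIndependent_empty_type
  obtain ⟨s, hsub, hs⟩ := Finset.exists_superset_card_eq (s := {u₁, u₂})
    (n := kruskalRank N) (by rwa [Finset.card_pair hne]) (by simpa using hle)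
  have := (hind s hs).injective (a₁ := ⟨u₁, hsub (by simp)⟩) (a₂ := ⟨u₂, hsub (by simp)⟩) hN
  exact hne (congrArg Subtype.val this)

theorem permMatrix_eq_toMatrix {n : ℕ} (σ : Equiv.Perm (Fin n)) :
    permMatrix σ = σ.toPEquiv.toMatrix := by
  ext i j
  simp [permMatrix, PEquiv.toMatrix_apply]

theorem transpose_permMatrix_mul {n : ℕ} {α : Type*} [Fintype α] (σ : Equiv.Perm (Fin n))
    (M : Matrix (Fin n) α ℝ) : (permMatrix σ)ᵀ * M = M.submatrix σ.symm id := by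
  rw [permMatrix_eq_toMatrix, ← PEquiv.toMatrix_symm, ← Equiv.toPEquiv_symm,
    PEquiv.toMatrix_toPEquiv_mul]

theorem mul_permMatrix {n : ℕ} {α : Type*} (σ : Equiv.Perm (Fin n)) (M : Matrix α (Fin n) ℝ) :
    M * permMatrix σ = M.submatrix id σ.symm := by
  rw [permMatrix_eq_toMatrix, PEquiv.mul_toMatrix_toPEquiv]

theorem vecMul_permMatrix_eq_comp {n : ℕ} (σ : Equiv.Perm (Fin n)) (v : Fin n → ℝ) :
    v ᵥ* permMatrix σ = v ∘ σ.symm := by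
  rw [permMatrix_eq_toMatrix, PEquiv.vecMul_toMatrix_toPEquiv]

def MarkovParams {r κ : ℕ} (M₁ M₂ : Matrix (Fin r) (Fin κ) ℝ) (M₃ : Matrix (Fin r) (Fin r) ℝ)
    (M₄ M₅ : Matrix (Fin r) (Fin κ) ℝ) (M₆ : Matrix (Fin r) (Fin r) ℝ)
    (M₇ M₈ : Matrix (Fin r) (Fin κ) ℝ) (M₉ : Matrix (Fin r) (Fin r) ℝ) : Prop :=
  IsMarkov M₁ ∧ IsMarkov M₂ ∧ IsMarkov M₃ ∧ IsMarkov M₄ ∧ IsMarkov M₅ ∧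
    IsMarkov M₆ ∧ IsMarkov M₇ ∧ IsMarkov M₈ ∧ IsMarkov M₉

variable {r κ : ℕ} {v w : Fin r → ℝ}
  {M₁ M₂ M₄ M₅ M₇ M₈ N₁ N₂ N₄ N₅ N₇ N₈ : Matrix (Fin r) (Fin κ) ℝ}
  {M₃ M₆ M₉ N₃ N₆ N₉ : Matrix (Fin r) (Fin r) ℝ}

theorem MarkovParams.mulVec_one (hM : MarkovParams M₁ M₂ M₃ M₄ M₅ M₆ M₇ M₈ M₉) :
    (M₃ * rowTensor M₁ M₂) *ᵥ 1 = 1 ∧ (M₆ * rowTensor M₄ M₅) *ᵥ 1 = 1 ∧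
      (M₉ * M₆ * rowTensor M₄ M₅) *ᵥ 1 = 1 ∧ M₇ *ᵥ 1 = 1 ∧ M₈ *ᵥ 1 = 1 := by
  obtain ⟨h₁, h₂, h₃, h₄, h₅, h₆, h₇, h₈, h₉⟩ := hM
  have h₄₅ := rowTensor_mulVec_one h₄.mulVec_one h₅.mulVec_one
  exact ⟨mul_mulVec_one h₃.mulVec_one (rowTensor_mulVec_one h₁.mulVec_one h₂.mulVec_one),
    mul_mulVec_one h₆.mulVec_one h₄₅,
    mul_mulVec_one (mul_mulVec_one h₉.mulVec_one h₆.mulVec_one) h₄₅, h₇.mulVec_one, h₈.mulVec_one⟩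

theorem jointDist_apply_eq_sum (x₁ x₂ x₃ x₄ x₅ x₆ : Fin κ) :
    jointDist v M₁ M₂ M₃ M₄ M₅ M₆ M₇ M₈ M₉ x₁ x₂ x₃ x₄ x₅ x₆ =
      ∑ u, ∑ u', v u * M₉ u u' * (M₃ * rowTensor M₁ M₂) u (x₁, x₂) *
        (M₆ * rowTensor M₄ M₅) u' (x₃, x₄) * M₇ u x₅ * M₈ u' x₆ := by
  simp only [jointDist, mul_apply, rowTensor, of_apply, Finset.mul_sum, Finset.sum_mul]
  refine Finset.sum_congr rfl fun u _ => Finset.sum_congr rfl fun u' _ => ?_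
  rw [Finset.sum_comm]
  exact Finset.sum_congr rfl fun a _ => Finset.sum_congr rfl fun b _ => by ring

theorem sum_jointDist_x₆ (hM₈ : M₈ *ᵥ 1 = 1) (x₁ x₂ x₃ x₄ x₅ : Fin κ) :
    ∑ x₆, jointDist v M₁ M₂ M₃ M₄ M₅ M₆ M₇ M₈ M₉ x₁ x₂ x₃ x₄ x₅ x₆ =
      cpTensor v (M₃ * rowTensor M₁ M₂) (M₉ * M₆ * rowTensor M₄ M₅) M₇ (x₁, x₂) (x₃, x₄) x₅ := by
  simp only [jointDist_apply_eq_sum, cpTensor, Matrix.mul_assoc M₉, mul_apply (M := M₉),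
    Finset.mul_sum, Finset.sum_mul]
  rw [Finset.sum_comm]
  refine Finset.sum_congr rfl fun u _ => ?_
  rw [Finset.sum_comm]
  refine Finset.sum_congr rfl fun u' _ => ?_
  rw [← Finset.mul_sum, sum_apply_eq_one_of_mulVec_one hM₈]
  ring

theorem sum_jointDist_x₅ (hM₇ : M₇ *ᵥ 1 = 1) (hv' : ∀ u, (v ᵥ* M₉) u ≠ 0)
    (x₁ x₂ x₃ x₄ x₆ : Fin κ) :
    ∑ x₅, jointDist v M₁ M₂ M₃ M₄ M₅ M₆ M₇ M₈ M₉ x₁ x₂ x₃ x₄ x₅ x₆ =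
      cpTensor (v ᵥ* M₉) (timeReversal v M₉ * (M₃ * rowTensor M₁ M₂)) (M₆ * rowTensor M₄ M₅) M₈
        (x₁, x₂) (x₃, x₄) x₆ := by
  simp only [jointDist_apply_eq_sum, cpTensor, vecMul_apply_mul_timeReversal_mul_apply hv',
    Finset.sum_mul]
  rw [Finset.sum_comm]
  refine (Finset.sum_congr rfl fun u _ => ?_).trans Finset.sum_comm
  rw [Finset.sum_comm]
  refine Finset.sum_congr rfl fun u' _ => ?_
  simp only [mul_right_comm _ (M₇ u _) (M₈ u' x₆)]
  rw [← Finset.mul_sum, sum_apply_eq_one_of_mulVec_one hM₇, mul_one]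

theorem exists_perm_at_root_of_jointDist_eq (hM : MarkovParams M₁ M₂ M₃ M₄ M₅ M₆ M₇ M₈ M₉)
    (hN : MarkovParams N₁ N₂ N₃ N₄ N₅ N₆ N₇ N₈ N₉) (hM₇ : 2 ≤ kruskalRank M₇)
    (hgoodN : GoodParams w N₁ N₂ N₃ N₄ N₅ N₆ N₇ N₈ N₉)
    (heq : jointDist v M₁ M₂ M₃ M₄ M₅ M₆ M₇ M₈ M₉ = jointDist w N₁ N₂ N₃ N₄ N₅ N₆ N₇ N₈ N₉) :
    ∃ π : Equiv.Perm (Fin r), v ∘ π = w ∧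
      (M₉ * M₆ * rowTensor M₄ M₅).submatrix π id = N₉ * N₆ * rowTensor N₄ N₅ ∧
      M₇.submatrix π id = N₇ := by
  obtain ⟨hAM, -, hBM, hCM, hM₈⟩ := hM.mulVec_one
  obtain ⟨hAN, -, hBN, hCN, hN₈⟩ := hN.mulVec_one
  obtain ⟨hw, -, -, hrkB, hrkA, -⟩ := hgoodN
  obtain ⟨π, hπ, -, hπB, hπC⟩ := cpTensor_unique (fun u => (hw u).ne')
    (hrkA.trans (Fintype.card_fin r).symm) (hrkB.trans (Fintype.card_fin r).symm)
    hAN hAM hBN hBM hCN hCM (injective_of_two_le_kruskalRank hM₇) <| by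
      funext ⟨x₁, x₂⟩ ⟨x₃, x₄⟩ x₅
      rw [← sum_jointDist_x₆ hN₈, ← sum_jointDist_x₆ hM₈, heq]
  exact ⟨π, hπ, hπB, hπC⟩

theorem exists_perm_at_child_of_jointDist_eq (hM : MarkovParams M₁ M₂ M₃ M₄ M₅ M₆ M₇ M₈ M₉)
    (hN : MarkovParams N₁ N₂ N₃ N₄ N₅ N₆ N₇ N₈ N₉) (hv' : ∀ u, 0 < (v ᵥ* M₉) u)
    (hM₈ : 2 ≤ kruskalRank M₈) (hgoodN : GoodParams w N₁ N₂ N₃ N₄ N₅ N₆ N₇ N₈ N₉)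
    (heq : jointDist v M₁ M₂ M₃ M₄ M₅ M₆ M₇ M₈ M₉ = jointDist w N₁ N₂ N₃ N₄ N₅ N₆ N₇ N₈ N₉) :
    ∃ π : Equiv.Perm (Fin r), (M₆ * rowTensor M₄ M₅).submatrix π id = N₆ * rowTensor N₄ N₅ := by
  obtain ⟨hAM, hBM, -, hM₇, hCM⟩ := hM.mulVec_one
  obtain ⟨hAN, hBN, -, hN₇, hCN⟩ := hN.mulVec_one
  obtain ⟨-, hw', hrkB, -, -, hrkA, -⟩ := hgoodN
  have hv'₀ : ∀ u, (v ᵥ* M₉) u ≠ 0 := fun u => (hv' u).ne'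
  have hw'₀ : ∀ u, (w ᵥ* N₉) u ≠ 0 := fun u => (hw' u).ne'
  obtain ⟨π, -, -, hπ, -⟩ := cpTensor_unique hw'₀
    (A := timeReversal w N₉ * (N₃ * rowTensor N₁ N₂))
    (hrkA.trans (Fintype.card_fin r).symm) (hrkB.trans (Fintype.card_fin r).symm)
    (mul_mulVec_one (timeReversal_mulVec_one hw'₀) hAN)
    (mul_mulVec_one (timeReversal_mulVec_one hv'₀) hAM) hBN hBM hCN hCM
    (injective_of_two_le_kruskalRank hM₈) <| by
      funext ⟨x₁, x₂⟩ ⟨x₃, x₄⟩ x₆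
      rw [← sum_jointDist_x₅ hN₇ hw'₀, ← sum_jointDist_x₅ hM₇ hv'₀, heq]
  exact ⟨π, hπ⟩

end SixLeafTree

theorem central_edge_identifiable_general {r κ : ℕ}
    (v w : Fin r → ℝ)
    (M₁ M₂ : Matrix (Fin r) (Fin κ) ℝ) (M₃ : Matrix (Fin r) (Fin r) ℝ)
    (M₄ M₅ : Matrix (Fin r) (Fin κ) ℝ) (M₆ : Matrix (Fin r) (Fin r) ℝ)
    (M₇ M₈ : Matrix (Fin r) (Fin κ) ℝ) (M₉ : Matrix (Fin r) (Fin r) ℝ)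
    (N₁ N₂ : Matrix (Fin r) (Fin κ) ℝ) (N₃ : Matrix (Fin r) (Fin r) ℝ)
    (N₄ N₅ : Matrix (Fin r) (Fin κ) ℝ) (N₆ : Matrix (Fin r) (Fin r) ℝ)
    (N₇ N₈ : Matrix (Fin r) (Fin κ) ℝ) (N₉ : Matrix (Fin r) (Fin r) ℝ)
    (hM : IsMarkov M₁ ∧ IsMarkov M₂ ∧ IsMarkov M₃ ∧ IsMarkov M₄ ∧ IsMarkov M₅ ∧
      IsMarkov M₆ ∧ IsMarkov M₇ ∧ IsMarkov M₈ ∧ IsMarkov M₉)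
    (hN : IsMarkov N₁ ∧ IsMarkov N₂ ∧ IsMarkov N₃ ∧ IsMarkov N₄ ∧ IsMarkov N₅ ∧
      IsMarkov N₆ ∧ IsMarkov N₇ ∧ IsMarkov N₈ ∧ IsMarkov N₉)
    (hgoodM : GoodParams v M₁ M₂ M₃ M₄ M₅ M₆ M₇ M₈ M₉)
    (hgoodN : GoodParams w N₁ N₂ N₃ N₄ N₅ N₆ N₇ N₈ N₉)
    (heq : jointDist v M₁ M₂ M₃ M₄ M₅ M₆ M₇ M₈ M₉ =
      jointDist w N₁ N₂ N₃ N₄ N₅ N₆ N₇ N₈ N₉) :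
    ∃ (σ₁ σ₂ : Equiv.Perm (Fin r)),
      N₉ = (permMatrix σ₁)ᵀ * M₉ * permMatrix σ₂ ∧
      N₇ = (permMatrix σ₁)ᵀ * M₇ ∧
      w = Matrix.vecMul v (permMatrix σ₁) := by
  obtain ⟨-, hv', -, -, -, -, hM₇, hM₈⟩ := hgoodM
  obtain ⟨π₁, hv, hB₉, h₇⟩ := exists_perm_at_root_of_jointDist_eq hM hN hM₇ hgoodN heq
  obtain ⟨π₂, hB₆⟩ := exists_perm_at_child_of_jointDist_eq hM hN hv' hM₈ hgoodN heq
  refine ⟨π₁.symm, π₂.symm, ?_, ?_, ?_⟩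
  · simp only [transpose_permMatrix_mul, mul_permMatrix, Equiv.symm_symm, submatrix_submatrix,
      Function.comp_id, Function.id_comp]
    exact eq_submatrix_of_mul_eq (hgoodN.2.2.1.trans (Fintype.card_fin r).symm)
      (by simpa only [Matrix.mul_assoc] using hB₉) hB₆
  · rw [transpose_permMatrix_mul, Equiv.symm_symm, h₇]
  · rw [vecMul_permMatrix_eq_comp, Equiv.symm_symm, hv]

/-- Identifiability of the central-edge Markov matrix, the root distribution and
the pendant matrix `M₇` on the 6-leaf tree, up to permutations. -/
theorem central_edge_identifiable {r κ : ℕ} (hr : 0 < r) (hκ : 0 < κ)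
    (v w : Fin r → ℝ)
    (M₁ M₂ : Matrix (Fin r) (Fin κ) ℝ) (M₃ : Matrix (Fin r) (Fin r) ℝ)
    (M₄ M₅ : Matrix (Fin r) (Fin κ) ℝ) (M₆ : Matrix (Fin r) (Fin r) ℝ)
    (M₇ M₈ : Matrix (Fin r) (Fin κ) ℝ) (M₉ : Matrix (Fin r) (Fin r) ℝ)
    (N₁ N₂ : Matrix (Fin r) (Fin κ) ℝ) (N₃ : Matrix (Fin r) (Fin r) ℝ)
    (N₄ N₅ : Matrix (Fin r) (Fin κ) ℝ) (N₆ : Matrix (Fin r) (Fin r) ℝ)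
    (N₇ N₈ : Matrix (Fin r) (Fin κ) ℝ) (N₉ : Matrix (Fin r) (Fin r) ℝ)
    (hM : IsMarkov M₁ ∧ IsMarkov M₂ ∧ IsMarkov M₃ ∧ IsMarkov M₄ ∧ IsMarkov M₅ ∧
      IsMarkov M₆ ∧ IsMarkov M₇ ∧ IsMarkov M₈ ∧ IsMarkov M₉)
    (hN : IsMarkov N₁ ∧ IsMarkov N₂ ∧ IsMarkov N₃ ∧ IsMarkov N₄ ∧ IsMarkov N₅ ∧
      IsMarkov N₆ ∧ IsMarkov N₇ ∧ IsMarkov N₈ ∧ IsMarkov N₉)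
    (hgoodM : GoodParams v M₁ M₂ M₃ M₄ M₅ M₆ M₇ M₈ M₉)
    (hgoodN : GoodParams w N₁ N₂ N₃ N₄ N₅ N₆ N₇ N₈ N₉)
    (heq : jointDist v M₁ M₂ M₃ M₄ M₅ M₆ M₇ M₈ M₉ =
      jointDist w N₁ N₂ N₃ N₄ N₅ N₆ N₇ N₈ N₉) :
    ∃ (σ₁ σ₂ : Equiv.Perm (Fin r)),
      N₉ = (permMatrix σ₁)ᵀ * M₉ * permMatrix σ₂ ∧
      N₇ = (permMatrix σ₁)ᵀ * M₇ ∧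
      w = Matrix.vecMul v (permMatrix σ₁) :=
  central_edge_identifiable_general v w M₁ M₂ M₃ M₄ M₅ M₆ M₇ M₈ M₉ N₁ N₂ N₃ N₄ N₅ N₆ N₇ N₈ N₉ hM hN
    hgoodM hgoodN heq
end

section
/- Let c, κ be positive integers and let R be a real cκ × cκ matrix, with rows and columns indexed by pairs in [c]×[κ], such that: every row of R sums to 0; all off-diagonal entries of R are non-negative; there is a vector μ ∈ ℝ^{cκ} with all entries positive such that diag(μ)·R is symmetric; and R is irreducible, meaning that for any two distinct indices x, y there is a sequence of indices x = z₀, z₁, …, z_m = y with R(z_l, z_{l+1}) > 0 for each l. Then there exist a real diagonal cκ × cκ matrix B = diag(β₁,…,β_{cκ}) with β₁ = 0 and β_k < 0 for all k ≥ 2, and a real cκ × κ matrix K of rank κ, such that for every t ≥ 0, Jᵀ·diag(μ)·exp(Rt)·J = Kᵀ·exp(Bt)·K. -/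
/-!
Conjugating `R` by `diag(√μ)` gives a symmetric matrix `S = diag(√μ) R diag(√μ)⁻¹`, so
`S = U diag(β) Uᵀ` with `U` orthogonal, and then
`diag(μ) exp(Rt) = Wᵀ exp(diag(β) t) W` with `W = Uᵀ diag(√μ)`. Since `diag(μ) R` is symmetric
with zero row sums, `zᵀ diag(μ) R z = -½ ∑ μₓ Rₓᵧ (zₓ - zᵧ)²`, so every `βᵢ ≤ 0`, and the kernel
of `R` consists of the vectors constant along positive entries of `R`, which by irreducibility
are the constant vectors. Hence `R`, and with it `S`, has rank `cκ - 1`: exactly one `βᵢ` is zero.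
Finally `K = W J` has rank `κ` because `W` is invertible and `Jᵀ J = c I`.
-/

open Matrix

/-- The matrix `J = 1_cᵀ ⊗ I_κ` hiding class information. -/
def Jmat (c κ : ℕ) : Matrix (Fin c × Fin κ) (Fin κ) ℝ :=
  Matrix.of fun p k => if p.2 = k then 1 else 0

namespace Matrix

section QuadraticForm

variable {n 𝕜 : Type*}

theorem mul_sub_sq_nonneg [CommRing 𝕜] [LinearOrder 𝕜] [IsStrictOrderedRing 𝕜]
    {M : Matrix n n 𝕜} (hoff : ∀ x y, x ≠ y → 0 ≤ M x y) (z : n → 𝕜) (x y : n) :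
    0 ≤ M x y * (z x - z y) ^ 2 := by
  rcases eq_or_ne x y with rfl | hxy
  · simp
  · exact mul_nonneg (hoff x y hxy) (sq_nonneg _)

variable [Fintype n]

theorem neg_two_mul_dotProduct_mulVec_self [CommRing 𝕜] {M : Matrix n n 𝕜} (hM : M.IsSymm)
    (hrows : ∀ x, ∑ y, M x y = 0) (z : n → 𝕜) :
    -(2 * (z ⬝ᵥ M *ᵥ z)) = ∑ x, ∑ y, M x y * (z x - z y) ^ 2 := by
  have hleft : ∑ x, ∑ y, M x y * z x ^ 2 = 0 := by
    simp [← Finset.sum_mul, hrows]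
  have hright : ∑ x, ∑ y, M x y * z y ^ 2 = 0 := by
    rw [Finset.sum_comm]
    simp [← Finset.sum_mul, hM.apply, hrows]
  have hcross : z ⬝ᵥ M *ᵥ z = ∑ x, ∑ y, M x y * z x * z y := by
    simp only [dotProduct, mulVec, Finset.mul_sum]
    exact Finset.sum_congr rfl fun x _ => Finset.sum_congr rfl fun y _ => by ring
  calc -(2 * (z ⬝ᵥ M *ᵥ z))
      = ∑ x, ∑ y, M x y * z x ^ 2 + ∑ x, ∑ y, M x y * z y ^ 2
          - 2 * ∑ x, ∑ y, M x y * z x * z y := by rw [hleft, hright, hcross]; ring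
    _ = ∑ x, ∑ y, M x y * (z x - z y) ^ 2 := by
      simp only [Finset.mul_sum, ← Finset.sum_add_distrib, ← Finset.sum_sub_distrib]
      exact Finset.sum_congr rfl fun x _ => Finset.sum_congr rfl fun y _ => by ring

variable [CommRing 𝕜] [LinearOrder 𝕜] [IsStrictOrderedRing 𝕜] {M : Matrix n n 𝕜}

theorem dotProduct_mulVec_self_nonpos (hM : M.IsSymm) (hrows : ∀ x, ∑ y, M x y = 0)
    (hoff : ∀ x y, x ≠ y → 0 ≤ M x y) (z : n → 𝕜) : z ⬝ᵥ M *ᵥ z ≤ 0 := by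
  have hform := neg_two_mul_dotProduct_mulVec_self hM hrows z
  have hsum : 0 ≤ ∑ x, ∑ y, M x y * (z x - z y) ^ 2 :=
    Finset.sum_nonneg fun x _ => Finset.sum_nonneg fun y _ => mul_sub_sq_nonneg hoff z x y
  linarith

theorem eq_of_dotProduct_mulVec_self_eq_zero (hM : M.IsSymm) (hrows : ∀ x, ∑ y, M x y = 0)
    (hoff : ∀ x y, x ≠ y → 0 ≤ M x y) {z : n → 𝕜} (hz : z ⬝ᵥ M *ᵥ z = 0) {x y : n}
    (hxy : 0 < M x y) : z x = z y := by
  have hsum := neg_two_mul_dotProduct_mulVec_self hM hrows z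
  rw [hz, mul_zero, neg_zero, eq_comm, Finset.sum_eq_zero_iff_of_nonneg fun x _ =>
    Finset.sum_nonneg fun y _ => mul_sub_sq_nonneg hoff z x y] at hsum
  have hterm := (Finset.sum_eq_zero_iff_of_nonneg fun y _ => mul_sub_sq_nonneg hoff z x y).1
    (hsum x (Finset.mem_univ x)) y (Finset.mem_univ y)
  rw [mul_eq_zero, or_iff_right hxy.ne', sq_eq_zero_iff, sub_eq_zero] at hterm
  exact hterm

end QuadraticForm

section RateMatrix

variable {n 𝕜 : Type*} [Fintype n] [DecidableEq n] [Field 𝕜] {R : Matrix n n 𝕜} {μ : n → 𝕜}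

theorem sum_diagonal_mul_apply_eq_zero (hrows : ∀ x, ∑ y, R x y = 0) (x : n) :
    ∑ y, (diagonal μ * R) x y = 0 := by
  simp [diagonal_mul, ← Finset.mul_sum, hrows]

variable [LinearOrder 𝕜] [IsStrictOrderedRing 𝕜]

theorem diagonal_mul_apply_nonneg (hoff : ∀ x y, x ≠ y → 0 ≤ R x y) (hμ : ∀ x, 0 < μ x)
    {x y : n} (hxy : x ≠ y) : 0 ≤ (diagonal μ * R) x y := by
  rw [diagonal_mul]
  exact mul_nonneg (hμ x).le (hoff x y hxy)

theorem eq_of_mulVec_eq_zero_of_irreducible (hrows : ∀ x, ∑ y, R x y = 0)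
    (hoff : ∀ x y, x ≠ y → 0 ≤ R x y) (hμ : ∀ x, 0 < μ x) (hsym : (diagonal μ * R).IsSymm)
    (hirr : ∀ x y, x ≠ y → Relation.TransGen (fun a b => 0 < R a b) x y)
    {z : n → 𝕜} (hz : R *ᵥ z = 0) (x y : n) : z x = z y := by
  have hstep : ∀ a b, 0 < R a b → z a = z b := fun a b hab =>
    eq_of_dotProduct_mulVec_self_eq_zero hsym (sum_diagonal_mul_apply_eq_zero hrows)
      (fun _ _ => diagonal_mul_apply_nonneg hoff hμ)
      (by rw [← mulVec_mulVec, hz, mulVec_zero, dotProduct_zero])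
      (by rw [diagonal_mul]; exact mul_pos (hμ a) hab)
  rcases eq_or_ne x y with rfl | hxy
  · rfl
  · have hpath := hirr x y hxy
    clear hxy
    induction hpath with
    | single hab => exact hstep _ _ hab
    | tail _ hbc ih => exact ih.trans (hstep _ _ hbc)

theorem ker_mulVecLin_eq_span_one (hrows : ∀ x, ∑ y, R x y = 0)
    (hoff : ∀ x y, x ≠ y → 0 ≤ R x y) (hμ : ∀ x, 0 < μ x) (hsym : (diagonal μ * R).IsSymm)
    (hirr : ∀ x y, x ≠ y → Relation.TransGen (fun a b => 0 < R a b) x y) [Nonempty n] :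
    LinearMap.ker R.mulVecLin = 𝕜 ∙ 1 := by
  refine le_antisymm (fun z hz => ?_) ((Submodule.span_singleton_le_iff_mem _ _).2 ?_)
  · obtain ⟨x₀⟩ := ‹Nonempty n›
    refine Submodule.mem_span_singleton.2 ⟨z x₀, funext fun x => ?_⟩
    simpa using eq_of_mulVec_eq_zero_of_irreducible hrows hoff hμ hsym hirr hz x₀ x
  · ext x
    simpa [mulVec, dotProduct] using hrows x

theorem rank_eq_card_sub_one_of_irreducible (hrows : ∀ x, ∑ y, R x y = 0)
    (hoff : ∀ x y, x ≠ y → 0 ≤ R x y) (hμ : ∀ x, 0 < μ x) (hsym : (diagonal μ * R).IsSymm)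
    (hirr : ∀ x y, x ≠ y → Relation.TransGen (fun a b => 0 < R a b) x y) [Nonempty n] :
    R.rank = Fintype.card n - 1 := by
  have h := LinearMap.finrank_range_add_finrank_ker R.mulVecLin
  rw [ker_mulVecLin_eq_span_one hrows hoff hμ hsym hirr,
    finrank_span_singleton one_ne_zero, Module.finrank_fintype_fun_eq_card] at h
  rw [rank]
  omega

end RateMatrix

section Symmetrization

variable {n : Type*} [Fintype n] [DecidableEq n] {R : Matrix n n ℝ} {μ : n → ℝ}

/-- The similarity transform `diag(√μ) R diag(√μ)⁻¹` of `R` (see `eq_mul_symmetrization_mul`),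
written so that it visibly inherits the symmetry of `diag(μ) R`. -/
noncomputable def symmetrization (μ : n → ℝ) (R : Matrix n n ℝ) : Matrix n n ℝ :=
  diagonal (fun x => (√(μ x))⁻¹) * (diagonal μ * R) * diagonal (fun x => (√(μ x))⁻¹)

theorem isHermitian_symmetrization (hsym : (diagonal μ * R).IsSymm) :
    (symmetrization μ R).IsHermitian := by
  rw [isHermitian_iff_isSymm, IsSymm, symmetrization, transpose_mul, transpose_mul,
    diagonal_transpose, hsym.eq]
  simp only [Matrix.mul_assoc]

theorem eq_mul_symmetrization_mul (hμ : ∀ x, 0 < μ x) :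
    R = diagonal (fun x => (√(μ x))⁻¹) * symmetrization μ R * diagonal (fun x => √(μ x)) := by
  ext a b
  have ha := Real.sqrt_pos.2 (hμ a)
  have hb := Real.sqrt_pos.2 (hμ b)
  simp only [symmetrization, diagonal_mul, mul_diagonal]
  field_simp
  rw [Real.sq_sqrt (hμ a).le]

theorem rank_symmetrization (hμ : ∀ x, 0 < μ x) : (symmetrization μ R).rank = R.rank := by
  have hunit : ∀ d : n → ℝ, (∀ x, d x ≠ 0) → IsUnit (diagonal d).det := fun d hd => by
    rw [det_diagonal]
    exact (Finset.prod_ne_zero_iff.2 fun x _ => hd x).isUnit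
  have hinv : ∀ x, (√(μ x))⁻¹ ≠ 0 := fun x => inv_ne_zero (Real.sqrt_pos.2 (hμ x)).ne'
  rw [symmetrization, rank_mul_eq_left_of_isUnit_det _ _ (hunit _ hinv),
    rank_mul_eq_right_of_isUnit_det _ _ (hunit _ hinv),
    rank_mul_eq_right_of_isUnit_det _ _ (hunit _ fun x => (hμ x).ne')]

theorem dotProduct_symmetrization_mulVec (v : n → ℝ) :
    v ⬝ᵥ symmetrization μ R *ᵥ v
      = (fun x => (√(μ x))⁻¹ * v x) ⬝ᵥ (diagonal μ * R) *ᵥ (fun x => (√(μ x))⁻¹ * v x) := by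
  rw [symmetrization, ← mulVec_mulVec, ← mulVec_mulVec, dotProduct_mulVec]
  congr 2 <;> ext x <;> simp [vecMul_diagonal, mulVec_diagonal, mul_comm]

theorem eigenvalues_symmetrization_nonpos (hrows : ∀ x, ∑ y, R x y = 0)
    (hoff : ∀ x y, x ≠ y → 0 ≤ R x y) (hμ : ∀ x, 0 < μ x) (hsym : (diagonal μ * R).IsSymm)
    (i : n) : (isHermitian_symmetrization hsym).eigenvalues i ≤ 0 := by
  rw [IsHermitian.eigenvalues_eq]
  simp only [star_trivial, RCLike.re_to_real]
  rw [dotProduct_symmetrization_mulVec]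
  exact dotProduct_mulVec_self_nonpos hsym (sum_diagonal_mul_apply_eq_zero hrows)
    (fun _ _ => diagonal_mul_apply_nonneg hoff hμ) _

theorem exists_eigenvalues_symmetrization_eq_zero_iff (hμ : ∀ x, 0 < μ x)
    (hsym : (diagonal μ * R).IsSymm) [Nonempty n] (hrank : R.rank = Fintype.card n - 1) :
    ∃ i₀, ∀ i, (isHermitian_symmetrization hsym).eigenvalues i = 0 ↔ i = i₀ := by
  have hcard := (isHermitian_symmetrization hsym).rank_eq_card_non_zero_eigs
  rw [rank_symmetrization hμ, hrank, Fintype.card_subtype_compl] at hcard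
  set β := (isHermitian_symmetrization hsym).eigenvalues
  have hle := Fintype.card_subtype_le fun i => β i = 0
  have hpos := Fintype.card_pos (α := n)
  obtain ⟨⟨i₀, hi₀⟩, huniq⟩ :=
    Fintype.card_eq_one_iff.1 (by omega : Fintype.card {i // β i = 0} = 1)
  exact ⟨i₀, fun i => ⟨fun hi => congrArg Subtype.val (huniq ⟨i, hi⟩), fun h => h ▸ hi₀⟩⟩

theorem exp_smul_eq_of_eq_mul_diagonal_mul {V W : Matrix n n ℝ} {β : n → ℝ} (hVW : V * W = 1)
    (hR : R = V * diagonal β * W) (t : ℝ) :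
    NormedSpace.exp (t • R) = V * NormedSpace.exp (t • diagonal β) * W := by
  have hV : W⁻¹ = V := inv_eq_left_inv hVW
  rw [hR, ← smul_mul_assoc, ← mul_smul_comm, ← hV,
    exp_conj' _ _ ((isUnit_iff_isUnit_det W).2 (isUnit_det_of_left_inverse hVW))]

theorem exists_diagonal_mul_exp_smul_eq (hμ : ∀ x, 0 < μ x) (hsym : (diagonal μ * R).IsSymm) :
    ∃ W : Matrix n n ℝ, IsUnit W.det ∧ ∀ t : ℝ,
      diagonal μ * NormedSpace.exp (t • R)
        = Wᵀ * NormedSpace.exp (t • diagonal (isHermitian_symmetrization hsym).eigenvalues) * W := by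
  set hS := isHermitian_symmetrization hsym
  set β := hS.eigenvalues
  set U : Matrix n n ℝ := ↑hS.eigenvectorUnitary
  set D : Matrix n n ℝ := diagonal fun x => √(μ x)
  set E : Matrix n n ℝ := diagonal fun x => (√(μ x))⁻¹
  have hED : ∀ X : Matrix n n ℝ, E * (D * X) = X := fun X => by
    rw [← Matrix.mul_assoc, diagonal_mul_diagonal]
    simp [(Real.sqrt_pos.2 (hμ _)).ne']
  have hDE : ∀ X : Matrix n n ℝ, D * (E * X) = X := fun X => by
    rw [← Matrix.mul_assoc, diagonal_mul_diagonal]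
    simp [(Real.sqrt_pos.2 (hμ _)).ne']
  have hDD : D * D = diagonal μ := by
    rw [diagonal_mul_diagonal]
    simp [Real.mul_self_sqrt (hμ _).le]
  have hDt : Dᵀ = D := diagonal_transpose _
  have hU : U * star U = 1 := Unitary.mul_star_self_of_mem hS.eigenvectorUnitary.2
  have hspec : symmetrization μ R = U * diagonal β * star U := by
    simpa using hS.spectral_theorem
  have hR : R = E * U * diagonal β * (star U * D) := by
    rw [eq_mul_symmetrization_mul (R := R) hμ, hspec]
    simp only [Matrix.mul_assoc]
    rfl
  have hVW : E * U * (star U * D) = 1 := by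
    rw [Matrix.mul_assoc, ← Matrix.mul_assoc U, hU, Matrix.one_mul, ← Matrix.mul_one D, hED]
  refine ⟨star U * D, isUnit_det_of_left_inverse hVW, fun t => ?_⟩
  rw [exp_smul_eq_of_eq_mul_diagonal_mul hVW hR, ← hDD, transpose_mul, hDt,
    star_eq_conjTranspose, conjTranspose_eq_transpose_of_trivial, transpose_transpose]
  simp only [Matrix.mul_assoc, hDE]

end Symmetrization

section Reindex

variable {m n k : Type*} [Fintype m] [Fintype n]

theorem transpose_mul_mul_reindex {α : Type*} [NonUnitalNonAssocSemiring α] (e : m ≃ n) (K : Matrix m k α)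
    (A : Matrix m m α) :
    (reindex e (Equiv.refl k) K)ᵀ * reindex e e A * reindex e (Equiv.refl k) K = Kᵀ * A * K := by
  simp only [reindex_apply, transpose_submatrix, submatrix_mul_equiv]
  rfl

variable [DecidableEq m] [DecidableEq n]

theorem exp_smul_diagonal (t : ℝ) (β : m → ℝ) :
    NormedSpace.exp (t • diagonal β) = diagonal fun i => Real.exp (t * β i) := by
  rw [← diagonal_smul, exp_diagonal, Pi.exp_def, Real.exp_eq_exp_ℝ]
  rfl

theorem transpose_mul_exp_smul_diagonal_mul_reindex (e : m ≃ n) (K : Matrix m k ℝ) (β : m → ℝ)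
    (t : ℝ) :
    (reindex e (Equiv.refl k) K)ᵀ * NormedSpace.exp (t • diagonal (β ∘ e.symm))
      * reindex e (Equiv.refl k) K = Kᵀ * NormedSpace.exp (t • diagonal β) * K := by
  rw [exp_smul_diagonal, exp_smul_diagonal, ← transpose_mul_mul_reindex e K]
  simp only [reindex_apply, submatrix_diagonal_equiv]
  rfl

end Reindex

end Matrix

theorem Jmat_transpose_mul_self (c κ : ℕ) :
    (Jmat c κ)ᵀ * Jmat c κ = diagonal fun _ => (c : ℝ) := by
  ext k l
  simp only [Matrix.mul_apply, Matrix.transpose_apply, Jmat, Matrix.of_apply, Matrix.diagonal]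
  rw [Fintype.sum_prod_type]
  simp [Finset.sum_ite_eq, eq_comm]

theorem rank_Jmat {c : ℕ} (hc : 0 < c) (κ : ℕ) : (Jmat c κ).rank = κ := by
  rw [← rank_transpose_mul_self, Jmat_transpose_mul_self, rank_diagonal]
  simp [hc.ne']

theorem two_taxon_form_general {c κ : ℕ} (hcκ : 0 < c * κ)
    (R : Matrix (Fin c × Fin κ) (Fin c × Fin κ) ℝ)
    (hrows : ∀ x, ∑ y, R x y = 0)
    (hoffdiag : ∀ x y, x ≠ y → 0 ≤ R x y)
    (μ : Fin c × Fin κ → ℝ) (hμ : ∀ x, 0 < μ x)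
    (hsym : (Matrix.diagonal μ * R).IsSymm)
    (hirr : ∀ x y : Fin c × Fin κ, x ≠ y →
      Relation.TransGen (fun a b => 0 < R a b) x y) :
    ∃ (β : Fin (c * κ) → ℝ) (K : Matrix (Fin (c * κ)) (Fin κ) ℝ),
      β ⟨0, hcκ⟩ = 0 ∧ (∀ k : Fin (c * κ), (k : ℕ) ≠ 0 → β k < 0) ∧
      K.rank = κ ∧
      ∀ t : ℝ, 0 ≤ t →
        (Jmat c κ)ᵀ * Matrix.diagonal μ * NormedSpace.exp (t • R) * Jmat c κ =
          Kᵀ * NormedSpace.exp (t • Matrix.diagonal β) * K := by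
  have : Nonempty (Fin c × Fin κ) := ⟨finProdFinEquiv.symm ⟨0, hcκ⟩⟩
  obtain ⟨i₀, hzero⟩ := exists_eigenvalues_symmetrization_eq_zero_iff hμ hsym
    (rank_eq_card_sub_one_of_irreducible hrows hoffdiag hμ hsym hirr)
  obtain ⟨W, hW, hexp⟩ := exists_diagonal_mul_exp_smul_eq hμ hsym
  -- an enumeration of the states that lists the zero eigenvalue first
  let e : Fin c × Fin κ ≃ Fin (c * κ) :=
    finProdFinEquiv.trans (Equiv.swap (finProdFinEquiv i₀) ⟨0, hcκ⟩)
  have he : e.symm ⟨0, hcκ⟩ = i₀ := by simp [e]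
  refine ⟨(isHermitian_symmetrization hsym).eigenvalues ∘ e.symm,
    reindex e (Equiv.refl _) (W * Jmat c κ), by simp [he, hzero], fun k hk => ?_, ?_,
    fun t _ => ?_⟩
  · refine (eigenvalues_symmetrization_nonpos hrows hoffdiag hμ hsym _).lt_of_ne fun h => hk ?_
    simp [e.symm.injective (((hzero _).1 h).trans he.symm)]
  · rw [rank_reindex, rank_mul_eq_right_of_isUnit_det _ _ hW,
      rank_Jmat (Nat.pos_of_mul_pos_right hcκ)]
  · rw [transpose_mul_exp_smul_diagonal_mul_reindex, transpose_mul,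
      Matrix.mul_assoc (Jmat c κ)ᵀ (diagonal μ), hexp]
    simp only [Matrix.mul_assoc]

/-- The two-taxon distributions of a reversible irreducible covarion-type rate
matrix have the form `Kᵀ·exp(Bt)·K` with `B` diagonal having one zero and
otherwise negative entries, and `K` of rank `κ`. -/
theorem two_taxon_form {c κ : ℕ} (hc : 0 < c) (hκ : 0 < κ) (hcκ : 0 < c * κ)
    (R : Matrix (Fin c × Fin κ) (Fin c × Fin κ) ℝ)
    (hrows : ∀ x, ∑ y, R x y = 0)
    (hoffdiag : ∀ x y, x ≠ y → 0 ≤ R x y)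
    (μ : Fin c × Fin κ → ℝ) (hμ : ∀ x, 0 < μ x)
    (hsym : (Matrix.diagonal μ * R).IsSymm)
    (hirr : ∀ x y : Fin c × Fin κ, x ≠ y →
      Relation.TransGen (fun a b => 0 < R a b) x y) :
    ∃ (β : Fin (c * κ) → ℝ) (K : Matrix (Fin (c * κ)) (Fin κ) ℝ),
      β ⟨0, hcκ⟩ = 0 ∧ (∀ k : Fin (c * κ), (k : ℕ) ≠ 0 → β k < 0) ∧
      K.rank = κ ∧
      ∀ t : ℝ, 0 ≤ t →
        (Jmat c κ)ᵀ * Matrix.diagonal μ * NormedSpace.exp (t • R) * Jmat c κ =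
          Kᵀ * NormedSpace.exp (t • Matrix.diagonal β) * K :=
  two_taxon_form_general hcκ R hrows hoffdiag μ hμ hsym hirr
end

section
/- Let c, κ be positive integers, Q a real κ × κ matrix, S a real c × c matrix each of whose rows sums to 0, r₁,…,r_c real numbers, and set R = diag(r₁,…,r_c) ⊗ Q + S ⊗ I_κ. Then for every integer l ≥ 1 there exist row vectors y_{l,1},…,y_{l,l−1} ∈ ℝ^c such that R^l · J = (diag(r₁,…,r_c)^l 1_cᵀ) ⊗ Q^l + ∑_{m=1}^{l−1} y_{l,m}ᵀ ⊗ Q^m, where 1_c ∈ ℝ^c is the all-ones row vector and J = 1_cᵀ ⊗ I_κ. -/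
open Matrix Kronecker

lemma Rmul_entry {c κ : ℕ} (Q : Matrix (Fin κ) (Fin κ) ℝ)
    (S : Matrix (Fin c) (Fin c) ℝ) (r : Fin c → ℝ)
    (M : Matrix (Fin c × Fin κ) (Fin κ) ℝ) (i : Fin c) (j k : Fin κ) :
    ((Matrix.diagonal r ⊗ₖ Q + S ⊗ₖ (1 : Matrix (Fin κ) (Fin κ) ℝ)) * M) (i, j) k
      = r i * ∑ j', Q j j' * M (i, j') k + ∑ i', S i i' * M (i', j) k := by
  rw [Matrix.mul_apply, Fintype.sum_prod_type]
  simp only [Matrix.add_apply, Matrix.kroneckerMap_apply, Matrix.one_apply,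
    Matrix.diagonal_apply, add_mul, Finset.sum_add_distrib, ite_mul, zero_mul,
    mul_ite, mul_zero, mul_one]
  congr 1
  · rw [Finset.sum_comm]
    simp [Finset.mul_sum, mul_assoc]
  · simp [Finset.sum_comm]

/-- Powers of a scaled covarion rate matrix applied to `J`: entrywise,
`R^l·J = (diag(r)^l 1_cᵀ) ⊗ Q^l + ∑_{m=1}^{l-1} y_{l,m}ᵀ ⊗ Q^m`. -/
theorem scov_power_structure {c κ : ℕ} (hc : 0 < c) (hκ : 0 < κ)
    (Q : Matrix (Fin κ) (Fin κ) ℝ)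
    (S : Matrix (Fin c) (Fin c) ℝ) (hS : ∀ i, ∑ i', S i i' = 0)
    (r : Fin c → ℝ) (l : ℕ) (hl : 1 ≤ l) :
    ∃ y : ℕ → Fin c → ℝ,
      ∀ (i : Fin c) (j k : Fin κ),
        ((Matrix.diagonal r ⊗ₖ Q + S ⊗ₖ (1 : Matrix (Fin κ) (Fin κ) ℝ)) ^ l *
            Jmat c κ) (i, j) k =
          r i ^ l * (Q ^ l) j k + ∑ m ∈ Finset.Ico 1 l, y m i * (Q ^ m) j k := by
  induction l, hl using Nat.le_induction with
  | base =>
    refine ⟨fun _ _ => 0, fun i j k => ?_⟩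
    rw [pow_one, Rmul_entry]
    simp [Jmat, ← Finset.sum_mul, hS]
  | succ l hl ih =>
    obtain ⟨y₀, hy₀⟩ := ih
    set y : ℕ → Fin c → ℝ := fun m i => if m ∈ Finset.Ico 1 l then y₀ m i else 0 with hydef
    have hy : ∀ (i : Fin c) (j k : Fin κ),
        ((Matrix.diagonal r ⊗ₖ Q + S ⊗ₖ (1 : Matrix (Fin κ) (Fin κ) ℝ)) ^ l *
            Jmat c κ) (i, j) k =
          r i ^ l * (Q ^ l) j k + ∑ m ∈ Finset.Ico 1 l, y m i * (Q ^ m) j k := by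
      intro i j k
      rw [hy₀]
      congr 1
      refine Finset.sum_congr rfl fun m hm => ?_
      obtain ⟨h1, h2⟩ := Finset.mem_Ico.mp hm
      simp [hydef, h1, h2]
    have hy0 : ∀ i, y 0 i = 0 := by intro i; simp [hydef]
    have hyl : ∀ i, y l i = 0 := by intro i; simp [hydef]
    refine ⟨fun m i => r i * y (m - 1) i + (∑ i', S i i' * y m i') +
      (if m = l then ∑ i', S i i' * r i' ^ l else 0), fun i j k => ?_⟩
    rw [pow_succ', Matrix.mul_assoc, Rmul_entry]
    simp only [hy]
    have hQ : ∀ (n : ℕ) (j k : Fin κ), (Q ^ (n + 1)) j k = ∑ j', Q j j' * (Q ^ n) j' k := by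
      intro n j k
      rw [pow_succ', Matrix.mul_apply]
    have keyQ : ∀ (n : ℕ) (a : ℝ), ∑ j', Q j j' * (a * (Q ^ n) j' k) = a * (Q ^ (n + 1)) j k := by
      intro n a
      rw [hQ, Finset.mul_sum]
      exact Finset.sum_congr rfl fun _ _ => by ring
    have t1 : r i * ∑ j', Q j j' *
          (r i ^ l * (Q ^ l) j' k + ∑ m ∈ Finset.Ico 1 l, y m i * (Q ^ m) j' k)
        = r i ^ (l + 1) * (Q ^ (l + 1)) j k
          + ∑ m ∈ Finset.Ico 1 l, r i * y m i * (Q ^ (m + 1)) j k := by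
      simp only [mul_add, Finset.sum_add_distrib, Finset.mul_sum]
      congr 1
      · rw [← Finset.mul_sum, keyQ l]; ring
      · rw [Finset.sum_comm]
        refine Finset.sum_congr rfl fun m _ => ?_
        rw [← Finset.mul_sum, keyQ m]
        ring
    have t2 : ∑ i', S i i' *
          (r i' ^ l * (Q ^ l) j k + ∑ m ∈ Finset.Ico 1 l, y m i' * (Q ^ m) j k)
        = (∑ i', S i i' * r i' ^ l) * (Q ^ l) j k
          + ∑ m ∈ Finset.Ico 1 l, (∑ i', S i i' * y m i') * (Q ^ m) j k := by
      simp only [mul_add, Finset.sum_add_distrib, Finset.mul_sum]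
      congr 1
      · rw [Finset.sum_mul]
        exact Finset.sum_congr rfl fun _ _ => by ring
      · rw [Finset.sum_comm]
        refine Finset.sum_congr rfl fun m _ => ?_
        rw [Finset.sum_mul]
        exact Finset.sum_congr rfl fun _ _ => by ring
    have rhs_split : ∑ m ∈ Finset.Ico 1 (l + 1),
        (r i * y (m - 1) i + (∑ i', S i i' * y m i') +
          (if m = l then ∑ i', S i i' * r i' ^ l else 0)) * (Q ^ m) j k
        = (∑ m ∈ Finset.Ico 1 (l + 1), r i * y (m - 1) i * (Q ^ m) j k)
          + (∑ m ∈ Finset.Ico 1 (l + 1), (∑ i', S i i' * y m i') * (Q ^ m) j k)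
          + (∑ i', S i i' * r i' ^ l) * (Q ^ l) j k := by
      simp only [add_mul, Finset.sum_add_distrib, ite_mul, zero_mul]
      congr 1
      rw [Finset.sum_ite_eq' (Finset.Ico 1 (l + 1)) l]
      simp [Nat.lt_succ_of_le hl, hl]
    have e1 : ∑ m ∈ Finset.Ico 1 (l + 1), r i * y (m - 1) i * (Q ^ m) j k
        = ∑ m ∈ Finset.Ico 1 l, r i * y m i * (Q ^ (m + 1)) j k := by
      obtain ⟨t, rfl⟩ : ∃ t, l = t + 1 := ⟨l - 1, (Nat.succ_pred_eq_of_pos hl).symm⟩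
      rw [Finset.sum_Ico_eq_sum_range, Finset.sum_Ico_eq_sum_range]
      simp only [Nat.add_sub_cancel, Nat.add_sub_cancel_left]
      rw [Finset.sum_range_succ']
      simp only [hy0, mul_zero, zero_mul, add_zero]
      refine Finset.sum_congr rfl fun x _ => ?_
      rw [Nat.add_comm 1 x, Nat.add_comm 1 (x + 1)]
    have e2 : ∑ m ∈ Finset.Ico 1 (l + 1), (∑ i', S i i' * y m i') * (Q ^ m) j k
        = ∑ m ∈ Finset.Ico 1 l, (∑ i', S i i' * y m i') * (Q ^ m) j k := by
      rw [Finset.sum_Ico_succ_top hl]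
      simp [hyl]
    rw [t1, t2, rhs_split, e1, e2]
    ring
end

section
/- Let c, κ be positive integers with c ≤ κ. Let Q be a κ × κ complex matrix admitting a diagonalization Q = U D U⁻¹, where U is an invertible κ × κ complex matrix all of whose entries are non-zero and D is a diagonal matrix having at least c pairwise distinct diagonal entries. Then for each j ∈ [κ], the c vectors given by the j-th rows of the matrix powers Q^l, l = 0, 1, …, c−1, are linearly independent. -/
open Matrix

/-- If `Q = U D U⁻¹` with `U` invertible with all entries non-zero and `D`
diagonal with at least `c` distinct diagonal entries, then for each `j` the
`j`-th rows of `Q⁰, Q¹, …, Q^{c-1}` are linearly independent. -/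
theorem rows_of_powers_linearIndependent {c κ : ℕ} (hc : 0 < c) (hcκ : c ≤ κ)
    (Q U : Matrix (Fin κ) (Fin κ) ℂ) (d : Fin κ → ℂ)
    (hU : IsUnit U) (hUentries : ∀ i j, U i j ≠ 0)
    (hdist : c ≤ (Finset.univ.image d).card)
    (hdiag : Q = U * Matrix.diagonal d * U⁻¹) :
    ∀ j : Fin κ, LinearIndependent ℂ (fun l : Fin c => (Q ^ (l : ℕ)) j) := by
  intro j
  rw [Fintype.linearIndependent_iff]
  intro g hg
  have hUdet : IsUnit U.det := (Matrix.isUnit_iff_isUnit_det U).mp hU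
  have hinv : U⁻¹ * U = 1 := Matrix.nonsing_inv_mul U hUdet
  have hQU : Q * U = U * Matrix.diagonal d := by
    rw [hdiag, mul_assoc, hinv, mul_one]
  have hpow : ∀ l : ℕ, Q ^ l * U = U * (Matrix.diagonal d) ^ l := by
    intro l
    induction l with
    | zero => simp
    | succ n ih =>
      rw [pow_succ, mul_assoc, hQU, ← mul_assoc, ih, mul_assoc, ← pow_succ]
  have h2 : ∀ (i : Fin κ) (l : ℕ), ∑ k, (Q ^ l) j k * U k i = U j i * d i ^ l := by
    intro i l
    have := congrFun (congrFun (hpow l) j) i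
    rw [Matrix.diagonal_pow, Matrix.mul_diagonal, Matrix.mul_apply] at this
    simpa using this
  have hroot : ∀ i, ∑ l : Fin c, g l * d i ^ (l : ℕ) = 0 := by
    intro i
    have h1 : ∑ l : Fin c, g l * (U j i * d i ^ (l : ℕ)) = 0 := by
      calc ∑ l : Fin c, g l * (U j i * d i ^ (l : ℕ))
          = ∑ l : Fin c, g l * (∑ k, (Q ^ (l : ℕ)) j k * U k i) := by
            simp_rw [h2]
        _ = ∑ k, (∑ l : Fin c, g l * (Q ^ (l : ℕ)) j k) * U k i := by
            simp_rw [Finset.mul_sum, Finset.sum_mul, mul_assoc]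
            rw [Finset.sum_comm]
        _ = ∑ k, (∑ l : Fin c, g l • (Q ^ (l : ℕ)) j) k * U k i := by
            simp [Finset.sum_apply, smul_eq_mul]
        _ = 0 := by rw [hg]; simp
    have h1' : U j i * ∑ l : Fin c, g l * d i ^ (l : ℕ) = 0 := by
      rw [Finset.mul_sum]
      rw [← h1]
      exact Finset.sum_congr rfl fun l _ => by ring
    exact (mul_eq_zero.mp h1').resolve_left (hUentries j i)
  set p : Polynomial ℂ := ∑ l : Fin c, Polynomial.monomial (l : ℕ) (g l) with hp
  have hpeval : ∀ x, p.eval x = ∑ l : Fin c, g l * x ^ (l : ℕ) := by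
    intro x
    simp [hp, Polynomial.eval_finset_sum]
  have hp0 : p = 0 := by
    by_contra hne
    have hdeg : p.natDegree < c := by
      have hdlt : p.degree < (c : ℕ) := by
        refine lt_of_le_of_lt (Polynomial.degree_sum_le _ _) ?_
        refine (Finset.sup_lt_iff ?_).mpr ?_
        · exact_mod_cast WithBot.bot_lt_coe (c : ℕ)
        · intro l _
          refine lt_of_le_of_lt (Polynomial.degree_monomial_le _ _) ?_
          exact_mod_cast l.2
      exact (Polynomial.natDegree_lt_iff_degree_lt hne).mpr hdlt
    have hsub : Finset.univ.image d ⊆ p.roots.toFinset := by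
      intro x hx
      simp only [Finset.mem_image] at hx
      obtain ⟨i, _, rfl⟩ := hx
      rw [Multiset.mem_toFinset, Polynomial.mem_roots hne]
      rw [Polynomial.IsRoot, hpeval]
      exact hroot i
    have hchain := (Finset.card_le_card hsub).trans
      ((Multiset.toFinset_card_le p.roots).trans (Polynomial.card_roots' p))
    exact absurd (hdist.trans hchain) (not_le.mpr hdeg)
  intro l
  have hcoeff : p.coeff (l : ℕ) = g l := by
    rw [hp, Polynomial.finset_sum_coeff]
    rw [Finset.sum_eq_single l]
    · simp [Polynomial.coeff_monomial]
    · intro m _ hml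
      rw [Polynomial.coeff_monomial]
      exact if_neg fun h => hml (Fin.ext h)
    · simp
  rw [← hcoeff, hp0, Polynomial.coeff_zero]
end

section
/- For every integer κ ≥ 2 there exist a symmetric real κ × κ matrix Q all of whose off-diagonal entries are positive and each of whose rows sums to 0, a real orthogonal κ × κ matrix U all of whose entries are non-zero, and a real diagonal κ × κ matrix D with pairwise distinct diagonal entries, such that Q = U D Uᵀ. In particular, such a Q has κ distinct eigenvalues and its eigenvectors can be chosen to have all non-zero entries. -/
/-!
Let `U` be the Householder reflection exchanging `e₀` and the constant unit vector `𝟙 / √κ`: it is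
symmetric and orthogonal, its first row and column are `1 / √κ`, and its other entries are
`δᵢⱼ - 1 / (κ - √κ)`, non-zero because `κ - √κ ≠ 1` for an integer `κ`. Put `Q = U D Uᵀ` with
`D = diag(0, d₁, …, d_{κ-1})`, `dₖ = k / κ - κ`. As `Uᵀ𝟙 = √κ e₀` and `d₀ = 0`, `Q𝟙 = 0`. Writing
`D = diag(k / κ) - κ (I - e₀e₀ᵀ)` gives `Q = U diag(k / κ) Uᵀ - κ I + 𝟙𝟙ᵀ`, so off the diagonal
`Q` is `1` plus an entry of absolute value at most `max k / κ < 1`, since the rows of `U` are unit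
vectors.
-/

open Matrix Finset

lemma natCast_sub_sqrt_ne_one (N : ℕ) : (N : ℝ) - √N ≠ 1 := by
  intro h
  have hsq : (N : ℝ) = (N - 1) ^ 2 := by
    rw [← show √(N : ℝ) = N - 1 by linarith, Real.sq_sqrt (Nat.cast_nonneg N)]
  have hN : N ^ 2 + 1 = 3 * N := by exact_mod_cast (by nlinarith : (N : ℝ) ^ 2 + 1 = 3 * N)
  have : N ≤ 3 := by nlinarith
  interval_cases N <;> omega

lemma one_lt_sqrt_card {n : Type*} [Fintype n] (hn : 2 ≤ Fintype.card n) :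
    1 < √(Fintype.card n : ℝ) := by
  rw [Real.lt_sqrt zero_le_one]
  exact_mod_cast hn

namespace Matrix

variable {n : Type*} [Fintype n] [DecidableEq n]

noncomputable def householder (v : n → ℝ) : Matrix n n ℝ :=
  1 - (2 / (v ⬝ᵥ v)) • vecMulVec v v

lemma householder_apply (v : n → ℝ) (i j : n) :
    householder v i j = (if i = j then 1 else 0) - 2 / (v ⬝ᵥ v) * (v i * v j) := by
  simp [householder, one_apply, vecMulVec_apply]

lemma transpose_householder (v : n → ℝ) : (householder v)ᵀ = householder v := by
  ext i j
  simp only [transpose_apply, householder_apply, eq_comm (a := i), mul_comm (v i)]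

lemma householder_mulVec (v x : n → ℝ) :
    householder v *ᵥ x = x - (2 * (v ⬝ᵥ x) / (v ⬝ᵥ v)) • v := by
  ext i
  simp [householder, sub_mulVec, smul_mulVec, vecMulVec_mulVec]
  ring

lemma householder_mul_self {v : n → ℝ} (hv : v ≠ 0) : householder v * householder v = 1 := by
  have hvv : v ⬝ᵥ v ≠ 0 := by simpa using hv
  refine ext_iff_mulVec.mpr fun x => ?_
  have hdot : v ⬝ᵥ (householder v *ᵥ x) = -(v ⬝ᵥ x) := by
    rw [householder_mulVec, dotProduct_sub, dotProduct_smul, smul_eq_mul]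
    field_simp
    ring
  rw [← mulVec_mulVec, one_mulVec, householder_mulVec _ (householder v *ᵥ x), hdot,
    householder_mulVec, mul_neg, neg_div, neg_smul, sub_neg_eq_add, sub_add_cancel]

lemma householder_sub_mulVec {x y : n → ℝ} (hxy : x ≠ y) (h : x ⬝ᵥ x = y ⬝ᵥ y) :
    householder (x - y) *ᵥ x = y := by
  have hv : (x - y) ⬝ᵥ (x - y) = 2 * ((x - y) ⬝ᵥ x) := by
    simp only [sub_dotProduct, dotProduct_sub, dotProduct_comm y x, h]; ring
  have hvv : (x - y) ⬝ᵥ (x - y) ≠ 0 := dotProduct_self_eq_zero.not.mpr (sub_ne_zero.mpr hxy)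
  rw [householder_mulVec, ← hv, div_self hvv, one_smul, sub_sub_cancel]

variable (n) in
noncomputable def flatHouseholder (i₀ : n) : Matrix n n ℝ :=
  householder (Pi.single i₀ 1 - fun _ => (√(Fintype.card n))⁻¹)

lemma single_ne_inv_sqrt_card (hn : 2 ≤ Fintype.card n) (i₀ : n) :
    Pi.single i₀ 1 ≠ fun _ : n => (√(Fintype.card n : ℝ))⁻¹ := by
  intro h
  have := congrFun h i₀
  rw [Pi.single_eq_same, eq_comm, inv_eq_one] at this
  exact (one_lt_sqrt_card hn).ne' this

lemma transpose_flatHouseholder (i₀ : n) : (flatHouseholder n i₀)ᵀ = flatHouseholder n i₀ :=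
  transpose_householder _

lemma flatHouseholder_mul_self (hn : 2 ≤ Fintype.card n) (i₀ : n) :
    flatHouseholder n i₀ * flatHouseholder n i₀ = 1 :=
  householder_mul_self (sub_ne_zero.mpr (single_ne_inv_sqrt_card hn i₀))

lemma flatHouseholder_apply_col (hn : 2 ≤ Fintype.card n) (i₀ i : n) :
    flatHouseholder n i₀ i i₀ = (√(Fintype.card n))⁻¹ := by
  have hs : √(Fintype.card n : ℝ) ^ 2 = Fintype.card n := Real.sq_sqrt (Nat.cast_nonneg _)
  have hnorm : Pi.single i₀ 1 ⬝ᵥ Pi.single i₀ 1 =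
      (fun _ : n => (√(Fintype.card n : ℝ))⁻¹) ⬝ᵥ fun _ => (√(Fintype.card n : ℝ))⁻¹ := by
    rw [single_one_dotProduct, Pi.single_eq_same]
    simp only [dotProduct, sum_const, card_univ, nsmul_eq_mul]
    field_simp
    exact hs
  simpa [flatHouseholder] using
    congrFun (householder_sub_mulVec (single_ne_inv_sqrt_card hn i₀) hnorm) i

lemma flatHouseholder_apply_of_ne (hn : 2 ≤ Fintype.card n) {i₀ i j : n} (hi : i ≠ i₀)
    (hj : j ≠ i₀) :
    flatHouseholder n i₀ i j =
      (if i = j then 1 else 0) - ((Fintype.card n : ℝ) - √(Fintype.card n))⁻¹ := by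
  have hs : √(Fintype.card n : ℝ) ^ 2 = Fintype.card n := Real.sq_sqrt (Nat.cast_nonneg _)
  have hs1 := one_lt_sqrt_card hn
  rw [flatHouseholder, householder_apply]
  set s := √(Fintype.card n : ℝ)
  have hvv : (Pi.single i₀ 1 - fun _ : n => s⁻¹) ⬝ᵥ (Pi.single i₀ 1 - fun _ => s⁻¹) =
      2 - 2 / s := by
    simp only [sub_dotProduct, dotProduct_sub, single_one_dotProduct, dotProduct_single_one,
      Pi.sub_apply, Pi.single_eq_same]
    simp only [dotProduct, sum_const, card_univ, nsmul_eq_mul, ← hs]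
    field_simp
    ring
  simp only [hvv, Pi.sub_apply, Pi.single_eq_of_ne hi, Pi.single_eq_of_ne hj, ← hs]
  congr 1
  field_simp
  ring

lemma flatHouseholder_apply_ne_zero (hn : 2 ≤ Fintype.card n) (i₀ i j : n) :
    flatHouseholder n i₀ i j ≠ 0 := by
  have hcol : ∀ i, flatHouseholder n i₀ i i₀ ≠ 0 := fun i => by
    rw [flatHouseholder_apply_col hn]; positivity
  obtain rfl | hj := eq_or_ne j i₀
  · exact hcol i
  obtain rfl | hi := eq_or_ne i i₀
  · rw [← transpose_flatHouseholder, transpose_apply]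
    exact hcol j
  have hs : √(Fintype.card n : ℝ) ^ 2 = Fintype.card n := Real.sq_sqrt (Nat.cast_nonneg _)
  have hs1 := one_lt_sqrt_card hn
  have hgap : 0 < (Fintype.card n : ℝ) - √(Fintype.card n) := by nlinarith
  rw [flatHouseholder_apply_of_ne hn hi hj]
  split_ifs
  · exact sub_ne_zero.mpr (Ne.symm (inv_ne_one.mpr (natCast_sub_sqrt_ne_one _)))
  · simpa using hgap.ne'

variable {R : Type*} [CommRing R]

lemma mul_diagonal_mul_transpose_apply {m : Type*} (U : Matrix m n R) (d : n → R) (i j : m) :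
    (U * diagonal d * Uᵀ) i j = ∑ k, d k * (U i k * U j k) := by
  rw [mul_apply]
  simp only [mul_diagonal, transpose_apply]
  exact sum_congr rfl fun k _ => by ring

lemma isSymm_mul_diagonal_mul_transpose (U : Matrix n n R) (d : n → R) :
    (U * diagonal d * Uᵀ).IsSymm := by
  rw [IsSymm, transpose_mul, transpose_mul, transpose_transpose, diagonal_transpose,
    Matrix.mul_assoc]

lemma sum_apply_eq_zero_of_ne [NoZeroDivisors R] {U : Matrix n n R} (hU : Uᵀ * U = 1) {i₀ : n}
    {c : R} (hc : c ≠ 0) (hcol : ∀ i, U i i₀ = c) {k : n} (hk : k ≠ i₀) : ∑ i, U i k = 0 := by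
  have horth := congrFun₂ hU i₀ k
  simp only [mul_apply, transpose_apply, hcol, one_apply_ne hk.symm, ← mul_sum] at horth
  exact (mul_eq_zero.mp horth).resolve_left hc

lemma sum_mul_diagonal_mul_transpose_apply_eq_zero [NoZeroDivisors R] {U : Matrix n n R}
    (hU : Uᵀ * U = 1) {i₀ : n} {c : R} (hc : c ≠ 0) (hcol : ∀ i, U i i₀ = c) {d : n → R}
    (hd : d i₀ = 0) (i : n) : ∑ j, (U * diagonal d * Uᵀ) i j = 0 := by
  simp only [mul_diagonal_mul_transpose_apply]
  rw [sum_comm]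
  refine sum_eq_zero fun k _ => ?_
  obtain rfl | hk := eq_or_ne k i₀
  · simp [hd]
  · simp only [← mul_assoc, ← mul_sum, sum_apply_eq_zero_of_ne hU hc hcol hk, mul_zero]

lemma mul_diagonal_shift_mul_transpose_apply_of_ne {U : Matrix n n R} (hU : U * Uᵀ = 1)
    {i₀ : n} {c : R} (hcol : ∀ i, U i i₀ = c) (w : n → R) (a : R) {i j : n} (hij : i ≠ j) :
    (U * diagonal (fun k => w k - a + if k = i₀ then a else 0) * Uᵀ) i j =
      (U * diagonal w * Uᵀ) i j + a * c ^ 2 := by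
  have horth := congrFun₂ hU i j
  simp only [mul_apply, transpose_apply, one_apply_ne hij] at horth
  simp only [mul_diagonal_mul_transpose_apply, add_mul, sub_mul, sum_add_distrib,
    sum_sub_distrib, ite_mul, zero_mul, sum_ite_eq', mem_univ, if_true, ← mul_sum, horth, hcol]
  ring

lemma abs_mul_diagonal_mul_transpose_apply_le {U : Matrix n n ℝ} (hU : U * Uᵀ = 1) {w : n → ℝ}
    {r : ℝ} (hw : ∀ k, |w k| ≤ r) (i j : n) : |(U * diagonal w * Uᵀ) i j| ≤ r := by
  have hrow : ∀ i, ∑ k, U i k ^ 2 = 1 := fun i => by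
    simpa [mul_apply, sq] using congrFun₂ hU i i
  have hr : 0 ≤ r := (abs_nonneg _).trans (hw i)
  rw [mul_diagonal_mul_transpose_apply]
  calc |∑ k, w k * (U i k * U j k)|
      ≤ ∑ k, r * ((U i k ^ 2 + U j k ^ 2) / 2) := by
        refine (abs_sum_le_sum_abs _ _).trans (sum_le_sum fun k _ => ?_)
        rw [abs_mul]
        refine mul_le_mul (hw k) (abs_le.mpr ⟨?_, ?_⟩) (abs_nonneg _) hr <;>
          nlinarith [sq_nonneg (U i k + U j k), sq_nonneg (U i k - U j k)]
    _ = r := by rw [← mul_sum, ← sum_div, sum_add_distrib, hrow, hrow]; ring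

end Matrix

noncomputable def rateEigenvalues (κ : ℕ) [NeZero κ] : Fin κ → ℝ :=
  fun k => (k.val : ℝ) / κ - κ + if k = 0 then (κ : ℝ) else 0

@[simp]
lemma rateEigenvalues_zero (κ : ℕ) [NeZero κ] : rateEigenvalues κ 0 = 0 := by
  simp [rateEigenvalues]

lemma rateEigenvalues_injective (κ : ℕ) [NeZero κ] : Function.Injective (rateEigenvalues κ) := by
  have hκ : (0 : ℝ) < κ := by exact_mod_cast Nat.pos_of_neZero κ
  have hneg : ∀ k : Fin κ, k ≠ 0 → rateEigenvalues κ k < 0 := fun k hk => by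
    have hk1 : (k.val : ℝ) / κ < 1 := by
      rw [div_lt_one hκ]; exact_mod_cast k.is_lt
    have hκ1 : (1 : ℝ) ≤ κ := by exact_mod_cast NeZero.one_le
    simp only [rateEigenvalues, if_neg hk]
    linarith
  intro k l h
  obtain rfl | hk := eq_or_ne k 0 <;> obtain rfl | hl := eq_or_ne l 0
  · rfl
  · exact absurd (rateEigenvalues_zero κ ▸ h) (hneg l hl).ne'
  · exact absurd (rateEigenvalues_zero κ ▸ h) (hneg k hk).ne
  · simp only [rateEigenvalues, if_neg hk, if_neg hl, add_zero, sub_left_inj] at h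
    exact Fin.ext (by exact_mod_cast (div_left_inj' hκ.ne').mp h)

lemma mul_diagonal_rateEigenvalues_mul_transpose_apply_pos {κ : ℕ} [NeZero κ]
    {U : Matrix (Fin κ) (Fin κ) ℝ} (hU : U * Uᵀ = 1) (hcol : ∀ i, U i 0 = (√κ)⁻¹) {i j : Fin κ}
    (hij : i ≠ j) : 0 < (U * diagonal (rateEigenvalues κ) * Uᵀ) i j := by
  have hκ : (0 : ℝ) < κ := by exact_mod_cast Nat.pos_of_neZero κ
  have hspread : ∀ k : Fin κ, |(k.val : ℝ) / κ| ≤ (κ - 1) / κ := fun k => by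
    rw [abs_of_nonneg (by positivity)]
    gcongr
    exact le_sub_iff_add_le.mpr (by exact_mod_cast k.is_lt)
  have hshift := mul_diagonal_shift_mul_transpose_apply_of_ne hU hcol
    (fun k : Fin κ => (k.val : ℝ) / κ) κ hij
  rw [inv_pow, Real.sq_sqrt hκ.le, mul_inv_cancel₀ hκ.ne'] at hshift
  have hsmall := abs_le.mp (abs_mul_diagonal_mul_transpose_apply_le hU hspread i j)
  have hlt : (κ - 1 : ℝ) / κ < 1 := by rw [div_lt_one hκ]; linarith
  unfold rateEigenvalues
  linarith

/-- For every `κ ≥ 2` there is a symmetric rate matrix `Q` with positive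
off-diagonal entries and rows summing to 0 admitting a diagonalization
`Q = U D Uᵀ` with `U` orthogonal with all entries non-zero and `D` diagonal
with pairwise distinct diagonal entries. -/
theorem exists_nice_rate_matrix (κ : ℕ) (hκ : 2 ≤ κ) :
    ∃ (Q U : Matrix (Fin κ) (Fin κ) ℝ) (d : Fin κ → ℝ),
      Q.IsSymm ∧
      (∀ i j, i ≠ j → 0 < Q i j) ∧
      (∀ i, ∑ j, Q i j = 0) ∧
      Uᵀ * U = 1 ∧
      (∀ i j, U i j ≠ 0) ∧
      Function.Injective d ∧
      Q = U * Matrix.diagonal d * Uᵀ := by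
  have : NeZero κ := ⟨by omega⟩
  have hcard : 2 ≤ Fintype.card (Fin κ) := by simpa using hκ
  set U := flatHouseholder (Fin κ) 0
  have hcol : ∀ i, U i 0 = (√κ)⁻¹ := by simpa using flatHouseholder_apply_col hcard 0
  have hUU : U * U = 1 := flatHouseholder_mul_self hcard 0
  have hUtU : Uᵀ * U = 1 := by rwa [transpose_flatHouseholder]
  have hUUt : U * Uᵀ = 1 := by rwa [transpose_flatHouseholder]
  exact ⟨U * diagonal (rateEigenvalues κ) * Uᵀ, U, rateEigenvalues κ,
    isSymm_mul_diagonal_mul_transpose U _,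
    fun i j => mul_diagonal_rateEigenvalues_mul_transpose_apply_pos hUUt hcol,
    sum_mul_diagonal_mul_transpose_apply_eq_zero hUtU (by positivity) hcol (rateEigenvalues_zero κ),
    hUtU, flatHouseholder_apply_ne_zero hcard 0, rateEigenvalues_injective κ, rfl⟩
end

section
/- Let n be a positive integer and let M be a real n × n matrix. Suppose M = P₁ W₁ᵀ Z₁ W₁ and M = P₂ W₂ᵀ Z₂ W₂, where for each k = 1, 2: Z_k is a real symmetric positive-definite m_k × m_k matrix, W_k is a real m_k × n matrix of rank n, and P_k is an n × n permutation matrix. Then P₁ = P₂. -/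
/-!
`A := WᵀZW` is positive definite because `W` has full column rank, and a permutation matrix `P` is
orthogonal, so `M = P A` is a polar decomposition of `M`. Then `MᵀM = A²` determines `A` as the
unique positive semidefinite square root of `MᵀM`, and `P = M A⁻¹` is determined as well.
-/

open Matrix

open scoped ComplexOrder

namespace Matrix

variable {m n : Type*} [Fintype n]

theorem mulVec_injective_of_rank_eq_card {K : Type*} [Field K] (W : Matrix m n K)
    (hW : W.rank = Fintype.card n) : Function.Injective W.mulVec := by
  have hrank := W.mulVecLin.finrank_range_add_finrank_ker
  rw [← Matrix.rank, hW, Module.finrank_fintype_fun_eq_card] at hrank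
  have hker : LinearMap.ker W.mulVecLin = ⊥ := Submodule.finrank_eq_zero.mp (by omega)
  exact LinearMap.ker_eq_bot.mp hker

theorem PosDef.transpose_mul_mul_of_rank_eq_card [Fintype m] {Z : Matrix m m ℝ} (hZ : Z.PosDef)
    {W : Matrix m n ℝ} (hW : W.rank = Fintype.card n) : (Wᵀ * Z * W).PosDef := by
  simpa only [conjTranspose_eq_transpose_of_trivial] using
    hZ.conjTranspose_mul_mul_same (W.mulVec_injective_of_rank_eq_card hW)

variable [DecidableEq n]

theorem conjTranspose_mul_self_unitary_mul {R : Type*} [CommRing R] [StarRing R]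
    {U : Matrix n n R} (hU : U ∈ unitaryGroup n R) (A : Matrix n n R) :
    (U * A)ᴴ * (U * A) = Aᴴ * A := by
  rw [conjTranspose_mul, mul_assoc, ← mul_assoc Uᴴ, ← star_eq_conjTranspose U,
    Unitary.star_mul_self_of_mem hU, one_mul]

variable {𝕜 : Type*} [RCLike 𝕜] {U V A B : Matrix n n 𝕜}

open scoped MatrixOrder in
theorem PosSemidef.eq_of_unitary_mul_eq (hU : U ∈ unitaryGroup n 𝕜) (hV : V ∈ unitaryGroup n 𝕜)
    (hA : A.PosSemidef) (hB : B.PosSemidef) (h : U * A = V * B) : A = B := by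
  have hsq : A ^ 2 = B ^ 2 := calc
    A ^ 2 = (U * A)ᴴ * (U * A) := by
      rw [conjTranspose_mul_self_unitary_mul hU, hA.isHermitian.eq, sq]
    _ = (V * B)ᴴ * (V * B) := by rw [h]
    _ = B ^ 2 := by rw [conjTranspose_mul_self_unitary_mul hV, hB.isHermitian.eq, sq]
  exact (CFC.sq_eq_sq_iff A B hA.nonneg hB.nonneg).mp hsq

theorem unitary_eq_of_mul_posDef_eq (hU : U ∈ unitaryGroup n 𝕜) (hV : V ∈ unitaryGroup n 𝕜)
    (hA : A.PosDef) (hB : B.PosSemidef) (h : U * A = V * B) : U = V := by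
  obtain rfl := hA.posSemidef.eq_of_unitary_mul_eq hU hV hB h
  exact hA.isUnit.mul_right_cancel h

end Matrix

theorem Equiv.Perm.permMatrix_mem_unitaryGroup {n R : Type*} [Fintype n] [DecidableEq n]
    [CommRing R] [StarRing R] (σ : Equiv.Perm n) : σ.permMatrix R ∈ unitaryGroup n R := by
  rw [mem_unitaryGroup_iff', star_eq_conjTranspose, conjTranspose_permMatrix, ← permMatrix_mul,
    mul_inv_cancel, permMatrix_one]

theorem permMatrix_eq_permMatrix {n : ℕ} (σ : Equiv.Perm (Fin n)) :
    permMatrix σ = σ.permMatrix ℝ := by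
  ext i j
  simp [permMatrix, PEquiv.toMatrix_apply]

theorem permMatrix_mem_unitaryGroup {n : ℕ} (σ : Equiv.Perm (Fin n)) :
    permMatrix σ ∈ unitaryGroup (Fin n) ℝ :=
  permMatrix_eq_permMatrix σ ▸ σ.permMatrix_mem_unitaryGroup

theorem perm_factor_unique_general {n m₁ m₂ : ℕ}
    (M : Matrix (Fin n) (Fin n) ℝ)
    (Z₁ : Matrix (Fin m₁) (Fin m₁) ℝ) (hZ₁ : Z₁.PosDef)
    (W₁ : Matrix (Fin m₁) (Fin n) ℝ) (hW₁ : W₁.rank = n)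
    (Z₂ : Matrix (Fin m₂) (Fin m₂) ℝ) (hZ₂ : Z₂.PosDef)
    (W₂ : Matrix (Fin m₂) (Fin n) ℝ) (hW₂ : W₂.rank = n)
    (σ₁ σ₂ : Equiv.Perm (Fin n))
    (hfac₁ : M = permMatrix σ₁ * (W₁ᵀ * Z₁ * W₁))
    (hfac₂ : M = permMatrix σ₂ * (W₂ᵀ * Z₂ * W₂)) :
    permMatrix σ₁ = permMatrix σ₂ := by
  have hA₁ := hZ₁.transpose_mul_mul_of_rank_eq_card (by rwa [Fintype.card_fin])
  have hA₂ := hZ₂.transpose_mul_mul_of_rank_eq_card (by rwa [Fintype.card_fin])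
  exact unitary_eq_of_mul_posDef_eq (permMatrix_mem_unitaryGroup σ₁)
    (permMatrix_mem_unitaryGroup σ₂) hA₁ hA₂.posSemidef (hfac₁.symm.trans hfac₂)

/-- In a factorization `M = P WᵀZW` with `Z` symmetric positive definite, `W` of
rank `n` and `P` a permutation matrix, the permutation matrix `P` is uniquely
determined by `M`. -/
theorem perm_factor_unique {n m₁ m₂ : ℕ} (hn : 0 < n)
    (M : Matrix (Fin n) (Fin n) ℝ)
    (Z₁ : Matrix (Fin m₁) (Fin m₁) ℝ) (hZ₁ : Z₁.PosDef)
    (W₁ : Matrix (Fin m₁) (Fin n) ℝ) (hW₁ : W₁.rank = n)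
    (Z₂ : Matrix (Fin m₂) (Fin m₂) ℝ) (hZ₂ : Z₂.PosDef)
    (W₂ : Matrix (Fin m₂) (Fin n) ℝ) (hW₂ : W₂.rank = n)
    (σ₁ σ₂ : Equiv.Perm (Fin n))
    (hfac₁ : M = permMatrix σ₁ * (W₁ᵀ * Z₁ * W₁))
    (hfac₂ : M = permMatrix σ₂ * (W₂ᵀ * Z₂ * W₂)) :
    permMatrix σ₁ = permMatrix σ₂ :=
  perm_factor_unique_general M Z₁ hZ₁ W₁ hW₁ Z₂ hZ₂ W₂ hW₂ σ₁ σ₂ hfac₁ hfac₂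
end

section
/- Let N₁ and N₂ be symmetric real n × n matrices, each of whose entries satisfy N(i,i) + N(j,j) > 2·N(i,j) for all indices i ≠ j. If N₂ = P N₁ for some n × n permutation matrix P, then N₁ = N₂. -/
open Matrix

/- Summing `2 A(τ i, i) ≤ A(τ i, τ i) + A(i, i)` over `i`, strict wherever `τ` moves `i`,
shows that a nontrivial row permutation strictly lowers the trace of such a matrix; applying
this to `σ` and `N₁` and to `σ⁻¹` and `N₂` gives `tr N₂ < tr N₁ < tr N₂` unless `σ = 1`. -/

theorem permMatrix_mul_eq_submatrix {n : ℕ} (σ : Equiv.Perm (Fin n))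
    (A : Matrix (Fin n) (Fin n) ℝ) : permMatrix σ * A = A.submatrix σ id := by
  ext i j
  simp [Matrix.mul_apply, permMatrix, ite_mul]

theorem Matrix.trace_submatrix_perm_lt {ι R : Type*} [Fintype ι] [Semiring R] [LinearOrder R]
    [IsStrictOrderedRing R] (A : Matrix ι ι R)
    (hA : ∀ i j, i ≠ j → 2 * A i j < A i i + A j j) {τ : Equiv.Perm ι} (hτ : τ ≠ 1) :
    (A.submatrix τ id).trace < A.trace := by
  have hle : ∀ i, 2 * A (τ i) i ≤ A (τ i) (τ i) + A i i := fun i => by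
    by_cases hi : τ i = i
    · rw [hi, two_mul]
    · exact (hA _ _ hi).le
  obtain ⟨i₀, hi₀⟩ : ∃ i, τ i ≠ i := by
    by_contra! h
    exact hτ (Equiv.ext h)
  have hlt : ∑ i, 2 * A (τ i) i < ∑ i, (A (τ i) (τ i) + A i i) :=
    Finset.sum_lt_sum (fun i _ => hle i) ⟨i₀, Finset.mem_univ _, hA _ _ hi₀⟩
  rw [← Finset.mul_sum, Finset.sum_add_distrib, Equiv.sum_comp τ (fun i => A i i),
    ← two_mul] at hlt
  simpa only [trace, diag_apply, submatrix_apply, id] using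
    lt_of_mul_lt_mul_left hlt zero_le_two

theorem symmetric_perm_eq_general {n : ℕ} (N₁ N₂ : Matrix (Fin n) (Fin n) ℝ)
    (hineq₁ : ∀ i j, i ≠ j → 2 * N₁ i j < N₁ i i + N₁ j j)
    (hineq₂ : ∀ i j, i ≠ j → 2 * N₂ i j < N₂ i i + N₂ j j)
    (σ : Equiv.Perm (Fin n)) (hperm : N₂ = permMatrix σ * N₁) :
    N₁ = N₂ := by
  rw [permMatrix_mul_eq_submatrix] at hperm
  have hinv : N₁ = N₂.submatrix ⇑σ⁻¹ id := by
    ext i j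
    simp [hperm]
  obtain rfl : σ = 1 := by
    by_contra hσ
    have h₁ := N₁.trace_submatrix_perm_lt hineq₁ hσ
    have h₂ := N₂.trace_submatrix_perm_lt hineq₂ (inv_ne_one.mpr hσ)
    rw [← hperm] at h₁
    rw [← hinv] at h₂
    exact lt_asymm h₁ h₂
  simpa using hperm.symm

/-- If `N₁` and `N₂` are symmetric matrices whose entries satisfy the strict
inequalities `N(i,i) + N(j,j) > 2·N(i,j)` for `i ≠ j`, and `N₂` is a row
permutation of `N₁`, then `N₁ = N₂`. -/
theorem symmetric_perm_eq {n : ℕ} (N₁ N₂ : Matrix (Fin n) (Fin n) ℝ)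
    (hsym₁ : N₁.IsSymm) (hsym₂ : N₂.IsSymm)
    (hineq₁ : ∀ i j, i ≠ j → 2 * N₁ i j < N₁ i i + N₁ j j)
    (hineq₂ : ∀ i j, i ≠ j → 2 * N₂ i j < N₂ i i + N₂ j j)
    (σ : Equiv.Perm (Fin n)) (hperm : N₂ = permMatrix σ * N₁) :
    N₁ = N₂ :=
  symmetric_perm_eq_general N₁ N₂ hineq₁ hineq₂ σ hperm
end

section
/- Let μ ∈ ℝⁿ be a vector with all entries positive and R a real n × n matrix such that diag(μ)·R is symmetric. Then for every t ∈ ℝ, the matrix diag(μ)·exp(Rt) is symmetric and positive definite. -/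
/-!
If `D` is positive definite and `D * R` is Hermitian, then `D * R = Rᴴ * D`, so `D` also
intertwines `exp R` with `exp Rᴴ = (exp R)ᴴ`. Writing `P = exp (R / 2)`, this gives
`D * exp R = Pᴴ * D * P`, a congruence of `D` by an invertible matrix, hence positive definite.
-/

open Matrix

namespace Matrix

open scoped ComplexOrder

variable {𝕜 ι : Type*} [RCLike 𝕜] [Fintype ι] [DecidableEq ι]

theorem mul_exp_eq_exp_conjTranspose_mul {D R : Matrix ι ι 𝕜} (hD : D.IsHermitian)
    (hDR : (D * R).IsHermitian) : D * NormedSpace.exp R = NormedSpace.exp Rᴴ * D := by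
  have h : SemiconjBy D R Rᴴ := by
    rw [SemiconjBy, ← hDR.eq, conjTranspose_mul, hD.eq]
  open scoped Norms.Operator in exact h.exp_right

theorem PosDef.mul_exp {D R : Matrix ι ι 𝕜} (hD : D.PosDef) (hDR : (D * R).IsHermitian) :
    (D * NormedSpace.exp R).PosDef := by
  set P := NormedSpace.exp ((1 / 2 : ℝ) • R)
  have hDP : D * P = Pᴴ * D := by
    rw [mul_exp_eq_exp_conjTranspose_mul hD.1 (by rw [Matrix.mul_smul]; exact hDR.smul (.all _)),
      exp_conjTranspose]
  have hexp : NormedSpace.exp R = P * P := by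
    rw [← exp_add_of_commute _ _ (Commute.refl _), ← add_smul, add_halves, one_smul]
  rw [hexp, ← mul_assoc, hDP]
  exact hD.conjTranspose_mul_mul_same (mulVec_injective_of_isUnit (isUnit_exp _))

end Matrix

/-- If `diag(μ)·R` is symmetric with `μ` positive, then `diag(μ)·exp(Rt)` is
symmetric and positive definite for every `t`. -/
theorem diag_mul_exp_posDef {n : ℕ} (μ : Fin n → ℝ) (hμ : ∀ i, 0 < μ i)
    (R : Matrix (Fin n) (Fin n) ℝ) (hsym : (Matrix.diagonal μ * R).IsSymm) (t : ℝ) :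
    (Matrix.diagonal μ * NormedSpace.exp (t • R)).IsSymm ∧
    (Matrix.diagonal μ * NormedSpace.exp (t • R)).PosDef := by
  have hDtR : (diagonal μ * (t • R)).IsHermitian := by
    rw [isHermitian_iff_isSymm, Matrix.mul_smul]
    exact hsym.smul t
  have hpos := (posDef_diagonal_iff.2 hμ).mul_exp hDtR
  exact ⟨isHermitian_iff_isSymm.1 hpos.1, hpos⟩
end

section
/- Let c ≥ 1 and κ ≥ 2 be integers with c ≠ κ. Consider the simple graph whose vertex set is [c]×[κ], with distinct vertices (i,j) and (i',j') adjacent if and only if i = i' or j = j'. Then a set C of vertices is a maximal clique of cardinality κ (i.e., C is a clique with |C| = κ that is not properly contained in any clique) if and only if C = {i}×[κ] for some i ∈ [c]. -/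
/-- The communication graph on `[c] × [κ]`: distinct vertices are adjacent iff
they share a class or share a base. -/
def commGraph (c κ : ℕ) : SimpleGraph (Fin c × Fin κ) :=
  SimpleGraph.fromRel (fun p q => p.1 = q.1 ∨ p.2 = q.2)

lemma commGraph_adj {c κ : ℕ} {p q : Fin c × Fin κ} :
    (commGraph c κ).Adj p q ↔ p ≠ q ∧ (p.1 = q.1 ∨ p.2 = q.2) := by
  unfold commGraph
  rw [SimpleGraph.fromRel_adj]
  constructor
  · rintro ⟨h, (h2 | h2) | (h2 | h2)⟩
    exacts [⟨h, Or.inl h2⟩, ⟨h, Or.inr h2⟩, ⟨h, Or.inl h2.symm⟩, ⟨h, Or.inr h2.symm⟩]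
  · rintro ⟨h, h2⟩
    exact ⟨h, Or.inl h2⟩

/-- When `c ≠ κ`, the maximal cliques of cardinality `κ` in the communication
graph are exactly the fixed-class sets `{i} × [κ]`. -/
theorem maximal_cliques_of_commGraph {c κ : ℕ} (hc : 1 ≤ c) (hκ : 2 ≤ κ)
    (hcκ : c ≠ κ) (C : Finset (Fin c × Fin κ)) :
    ((commGraph c κ).IsClique ↑C ∧ C.card = κ ∧
      ∀ C' : Finset (Fin c × Fin κ), (commGraph c κ).IsClique ↑C' → C ⊆ C' → C' = C) ↔
    ∃ i : Fin c, C = {i} ×ˢ (Finset.univ : Finset (Fin κ)) := by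
  constructor
  · rintro ⟨hclique, hcard, hmax⟩
    -- C is nonempty
    have hne : C.Nonempty := by
      rw [← Finset.card_pos, hcard]; omega
    obtain ⟨p, hp⟩ := hne
    -- All elements of C share first coordinate with p
    have hsame : ∀ q ∈ C, q.1 = p.1 := by
      by_contra h
      push_neg at h
      obtain ⟨q, hq, hq1⟩ := h
      have hpq : p ≠ q := fun h => hq1 (by rw [h])
      have hadj := hclique hp hq hpq
      rw [commGraph_adj] at hadj
      have h2 : p.2 = q.2 := by
        rcases hadj.2 with h | h
        · exact absurd h.symm hq1
        · exact h
      -- every r in C has r.2 = p.2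
      have hcol : ∀ r ∈ C, r.2 = p.2 := by
        intro r hr
        by_cases hrp : r = p
        · rw [hrp]
        by_cases hrq : r = q
        · rw [hrq, h2]
        have ha1 := hclique hr hp hrp
        have ha2 := hclique hr hq hrq
        rw [commGraph_adj] at ha1 ha2
        rcases ha1.2 with h1 | h1
        · rcases ha2.2 with hh | hh
          · exact absurd (h1.symm.trans hh).symm hq1
          · exact absurd (Prod.ext h1 (hh.trans h2.symm)) hrp
        · exact h1
      -- so C is contained in the full column, which is a clique
      set D : Finset (Fin c × Fin κ) := Finset.univ ×ˢ {p.2} with hD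
      have hDclique : (commGraph c κ).IsClique ↑D := by
        intro x hx y hy hxy
        simp only [hD, Finset.coe_product, Set.mem_prod, Finset.coe_singleton,
          Set.mem_singleton_iff, Finset.coe_univ, Set.mem_univ, true_and] at hx hy
        rw [commGraph_adj]
        exact ⟨hxy, Or.inr (hx.trans hy.symm)⟩
      have hsub : C ⊆ D := by
        intro r hr
        simp only [hD, Finset.mem_product, Finset.mem_univ, Finset.mem_singleton, true_and]
        exact hcol r hr
      have := hmax D hDclique hsub
      have hDcard : D.card = c := by
        simp [hD]
      rw [this, hcard] at hDcard
      exact hcκ hDcard.symm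
    refine ⟨p.1, ?_⟩
    have hsub : C ⊆ {p.1} ×ˢ (Finset.univ : Finset (Fin κ)) := by
      intro q hq
      simp only [Finset.mem_product, Finset.mem_singleton, Finset.mem_univ, and_true]
      exact hsame q hq
    refine Finset.eq_of_subset_of_card_le hsub ?_
    rw [hcard]
    simp
  · rintro ⟨i, rfl⟩
    have j1 : Fin κ := ⟨0, by omega⟩
    refine ⟨?_, ?_, ?_⟩
    · intro x hx y hy hxy
      simp only [Finset.coe_product, Set.mem_prod, Finset.coe_singleton,
        Set.mem_singleton_iff, Finset.coe_univ, Set.mem_univ, and_true] at hx hy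
      rw [commGraph_adj]
      exact ⟨hxy, Or.inl (hx.trans hy.symm)⟩
    · simp
    · intro C' hC' hsub
      apply Finset.Subset.antisymm _ hsub
      intro q hq
      simp only [Finset.mem_product, Finset.mem_singleton, Finset.mem_univ, and_true]
      by_contra hq1
      have hj : (⟨0, by omega⟩ : Fin κ) ≠ (⟨1, by omega⟩ : Fin κ) := by
        simp [Fin.ext_iff]
      have h1 : (i, (⟨0, by omega⟩ : Fin κ)) ∈ C' := hsub (by simp)
      have h2 : (i, (⟨1, by omega⟩ : Fin κ)) ∈ C' := hsub (by simp)
      have ha1 := hC' hq h1 (by intro h; apply hq1; rw [h])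
      have ha2 := hC' hq h2 (by intro h; apply hq1; rw [h])
      rw [commGraph_adj] at ha1 ha2
      have e1 : q.2 = (⟨0, by omega⟩ : Fin κ) := by
        rcases ha1.2 with h | h
        · exact absurd h hq1
        · exact h
      have e2 : q.2 = (⟨1, by omega⟩ : Fin κ) := by
        rcases ha2.2 with h | h
        · exact absurd h hq1
        · exact h
      exact hj (e1.symm.trans e2)
end

section
/- Let n and κ ≥ 2 be positive integers, let B = diag(β₁,…,β_n) be a real diagonal n × n matrix with β₁ = 0 and β_k < 0 for all k ≥ 2, and let K be a real n × κ matrix of rank κ. Then the map t ↦ Kᵀ·exp(Bt)·K is injective on [0,∞): if t₁, t₂ ≥ 0 and Kᵀ·exp(Bt₁)·K = Kᵀ·exp(Bt₂)·K, then t₁ = t₂. -/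
/-!
Since `rank K = κ ≥ 2`, the column space of `K` contains a nonzero vector `w = K v` with
`w₀ = 0`. Testing `Kᵀ exp(Bt) K` against `v` gives `∑ᵢ e^{βᵢ t} wᵢ²`, and every index carrying
weight `wᵢ² ≠ 0` has `βᵢ < 0`, so this is strictly decreasing in `t`, hence injective.
-/

open Matrix

theorem Submodule.exists_ne_zero_apply_eq_zero {K V : Type*} [Field K] [AddCommGroup V]
    [Module K V] (p : Submodule K V) (φ : V →ₗ[K] K) (hp : 1 < Module.finrank K p) :
    ∃ w ∈ p, w ≠ 0 ∧ φ w = 0 := by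
  have : FiniteDimensional K p := .of_finrank_pos (by omega)
  have hker : LinearMap.ker (φ.domRestrict p) ≠ ⊥ :=
    LinearMap.ker_ne_bot_of_finrank_lt (by rwa [Module.finrank_self])
  obtain ⟨w, hw, hw0⟩ := Submodule.exists_mem_ne_zero_of_ne_bot hker
  exact ⟨w, w.2, by simpa using hw0, hw⟩

theorem Matrix.dotProduct_transpose_mul_diagonal_mul_mulVec {m n R : Type*} [Fintype m]
    [Fintype n] [DecidableEq m] [CommSemiring R] (K : Matrix m n R) (d : m → R) (v : n → R) :
    v ⬝ᵥ (Kᵀ * diagonal d * K) *ᵥ v = ∑ i, d i * (K *ᵥ v) i ^ 2 := by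
  rw [← mulVec_mulVec, ← mulVec_mulVec, dotProduct_mulVec, vecMul_transpose]
  simp only [dotProduct, mulVec_diagonal]
  exact Finset.sum_congr rfl fun i _ => by ring

theorem Matrix.exp_smul_diagonal_s18 {n : Type*} [Fintype n] [DecidableEq n] (t : ℝ) (β : n → ℝ) :
    NormedSpace.exp (t • diagonal β) = diagonal fun i => Real.exp (t * β i) := by
  rw [← diagonal_smul, exp_diagonal, Pi.exp_def]
  simp [Real.exp_eq_exp_ℝ]

theorem strictAnti_sum_exp_mul_mul {ι : Type*} [Fintype ι] {β c : ι → ℝ} (hc : 0 ≤ c)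
    (hc0 : c ≠ 0) (hβ : ∀ i, c i ≠ 0 → β i < 0) :
    StrictAnti fun t => ∑ i, Real.exp (t * β i) * c i := by
  intro s t hst
  obtain ⟨i₀, hi₀⟩ := Function.ne_iff.mp hc0
  refine Finset.sum_lt_sum (fun i _ => ?_) ⟨i₀, Finset.mem_univ _, ?_⟩
  · rcases eq_or_ne (c i) 0 with hci | hci
    · simp [hci]
    · have := hβ i hci
      exact mul_le_mul_of_nonneg_right (Real.exp_le_exp.mpr (by nlinarith)) (hc i)
  · have := hβ i₀ hi₀
    exact mul_lt_mul_of_pos_right (Real.exp_lt_exp.mpr (by nlinarith)) ((hc i₀).lt_of_ne' hi₀)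

theorem edge_length_identifiable_general {n κ : ℕ} (hn : 0 < n) (hκ : 2 ≤ κ)
    (β : Fin n → ℝ)
    (hβneg : ∀ k : Fin n, (k : ℕ) ≠ 0 → β k < 0)
    (K : Matrix (Fin n) (Fin κ) ℝ) (hK : K.rank = κ)
    (t₁ t₂ : ℝ)
    (heq : Kᵀ * NormedSpace.exp (t₁ • Matrix.diagonal β) * K =
      Kᵀ * NormedSpace.exp (t₂ • Matrix.diagonal β) * K) :
    t₁ = t₂ := by
  obtain ⟨_, ⟨v, rfl⟩, hw, hw0⟩ := (LinearMap.range K.mulVecLin).exists_ne_zero_apply_eq_zero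
    (LinearMap.proj ⟨0, hn⟩) (by rw [← Matrix.rank, hK]; omega)
  set w := K *ᵥ v
  have hq (t : ℝ) : v ⬝ᵥ (Kᵀ * NormedSpace.exp (t • diagonal β) * K) *ᵥ v =
      ∑ i, Real.exp (t * β i) * w i ^ 2 := by
    rw [exp_smul_diagonal_s18, dotProduct_transpose_mul_diagonal_mul_mulVec]
  have hw_sq : (fun i => w i ^ 2) ≠ 0 := fun h =>
    hw (funext fun i => pow_eq_zero_iff two_ne_zero |>.mp (congrFun h i))
  have hβw (i : Fin n) (hi : w i ^ 2 ≠ 0) : β i < 0 := by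
    refine hβneg i fun h0 => hi ?_
    simpa [show i = ⟨0, hn⟩ from Fin.ext h0] using hw0
  refine (strictAnti_sum_exp_mul_mul (fun i => sq_nonneg (w i)) hw_sq hβw).injective ?_
  simpa only [hq] using congrArg (fun M => v ⬝ᵥ M *ᵥ v) heq

/-- Edge lengths are identifiable: the map `t ↦ Kᵀ·exp(Bt)·K` is injective on
`[0,∞)` when `B = diag(β)` with `β₁ = 0`, `β_k < 0` for `k ≥ 2`, and `K` has
rank `κ ≥ 2`. -/
theorem edge_length_identifiable {n κ : ℕ} (hn : 0 < n) (hκ : 2 ≤ κ)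
    (β : Fin n → ℝ) (hβ0 : β ⟨0, hn⟩ = 0)
    (hβneg : ∀ k : Fin n, (k : ℕ) ≠ 0 → β k < 0)
    (K : Matrix (Fin n) (Fin κ) ℝ) (hK : K.rank = κ)
    (t₁ t₂ : ℝ) (ht₁ : 0 ≤ t₁) (ht₂ : 0 ≤ t₂)
    (heq : Kᵀ * NormedSpace.exp (t₁ • Matrix.diagonal β) * K =
      Kᵀ * NormedSpace.exp (t₂ • Matrix.diagonal β) * K) :
    t₁ = t₂ :=
  edge_length_identifiable_general hn hκ β hβneg K hK t₁ t₂ heq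
end
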